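/- arXiv:2103.12510 — 4 statements merged into one kernel-verified Lean document; each statement's English description precedes it below -/
import Mathlib

section
/- Let $N_1$, $N_2$ be norms on $\mathbb{C}^{n_1}$, $\mathbb{C}^{n_2}$ respectively, $a_1,a_2>0$, and define the norm $N(z^1,z^2)=a_1N_1(z^1)+a_2N_2(z^2)$ on $\mathbb{C}^{n_1}\times\mathbb{C}^{n_2}$. For multi-indices $\alpha^1\in\mathbb{N}^{n_1}$, $\alpha^2\in\mathbb{N}^{n_2}$ with $\alpha=(\alpha^1,\alpha^2)$, let $\delta_N(\alpha)=\max\{|z^\alpha| : N(z)\le 1\}$. Then $\delta_N(\alpha) = \frac{|\alpha^1|^{|\alpha^1|}\,|\alpha^2|^{|\alpha^2|}}{|\alpha|^{|\alpha|}}\cdot\frac{\delta_{N_1}(\alpha^1)\,\delta_{N_2}(\alpha^2)}{a_1^{|\alpha^1|}a_2^{|\alpha^2|}}$ (with the convention $0^0=1$). -/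
/-!
The unit ball of a norm on a finite-dimensional space is compact, so `δ_{N₁}(α¹)` and
`δ_{N₂}(α²)` are attained, and homogeneity of monomials gives `|w^α| ≤ N(w)^{|α|} δ_N(α)`.
Hence for `a₁N₁(z¹) + a₂N₂(z²) ≤ 1` and `rᵢ = Nᵢ(zⁱ)`,
`|z^α| ≤ r₁^{k₁} r₂^{k₂} δ_{N₁}(α¹) δ_{N₂}(α²)` with `kᵢ = |αⁱ|`, and weighted AM-GM bounds
`(a₁r₁)^{k₁} (a₂r₂)^{k₂}` by `k₁^{k₁} k₂^{k₂} / (k₁+k₂)^{k₁+k₂}` when `a₁r₁ + a₂r₂ ≤ 1`.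
Equality holds at the maximisers of `δ_{N₁}` and `δ_{N₂}` rescaled by `rᵢ = kᵢ / (aᵢ(k₁+k₂))`.
-/

/-- `δ_N(α) = sup {|z^α| : N z ≤ 1}` on `ℂ^n`. -/
noncomputable def deltaN {n : ℕ} (N : (Fin n → ℂ) → ℝ) (α : Fin n → ℕ) : ℝ :=
  sSup ((fun z => ‖∏ i, z i ^ α i‖) '' {z | N z ≤ 1})

/-- `δ` for the combined monomial with respect to the norm `a₁N₁ + a₂N₂` on the product space. -/
noncomputable def deltaProd {n1 n2 : ℕ} (N : ((Fin n1 → ℂ) × (Fin n2 → ℂ)) → ℝ)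
    (α1 : Fin n1 → ℕ) (α2 : Fin n2 → ℕ) : ℝ :=
  sSup ((fun p : (Fin n1 → ℂ) × (Fin n2 → ℂ) =>
    ‖(∏ i, p.1 i ^ α1 i) * ∏ j, p.2 j ^ α2 j‖) '' {p | N p ≤ 1})

structure IsNorm (𝕜 : Type*) {E : Type*} [NormedField 𝕜] [AddCommGroup E] [Module 𝕜 E]
    (N : E → ℝ) : Prop where
  add_le : ∀ x y, N (x + y) ≤ N x + N y
  smul : ∀ (c : 𝕜) x, N (c • x) = ‖c‖ * N x
  eq_zero : ∀ x, N x = 0 → x = 0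

namespace IsNorm

section NormedField

variable {𝕜 E : Type*} [NormedField 𝕜] [AddCommGroup E] [Module 𝕜 E] {N : E → ℝ}

theorem map_zero (hN : IsNorm 𝕜 N) : N 0 = 0 := by
  simpa using hN.smul 0 0

theorem map_neg (hN : IsNorm 𝕜 N) (x : E) : N (-x) = N x := by
  simpa using hN.smul (-1) x

theorem nonneg (hN : IsNorm 𝕜 N) (x : E) : 0 ≤ N x := by
  have h := hN.add_le x (-x)
  rw [add_neg_cancel, hN.map_zero, hN.map_neg] at h
  linarith

def toAddGroupNorm (hN : IsNorm 𝕜 N) : AddGroupNorm E where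
  toFun := N
  map_zero' := hN.map_zero
  add_le' := hN.add_le
  neg' := hN.map_neg
  eq_zero_of_map_eq_zero' := hN.eq_zero

end NormedField

theorem exists_eq_smul {𝕜 E : Type*} [RCLike 𝕜] [AddCommGroup E] [Module 𝕜 E] {N : E → ℝ}
    (hN : IsNorm 𝕜 N) (w : E) : ∃ u, N u ≤ 1 ∧ w = (N w : 𝕜) • u := by
  by_cases hw : N w = 0
  · exact ⟨0, by rw [hN.map_zero]; exact zero_le_one, by rw [smul_zero, hN.eq_zero w hw]⟩
  · refine ⟨(N w : 𝕜)⁻¹ • w, ?_, ?_⟩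
    · rw [hN.smul, norm_inv, RCLike.norm_ofReal, abs_of_nonneg (hN.nonneg w), inv_mul_cancel₀ hw]
    · rw [smul_smul, mul_inv_cancel₀ (RCLike.ofReal_ne_zero.mpr hw), one_smul]

end IsNorm

/-- A type synonym for `E`, to carry a norm other than the one of `E`. -/
def Renormed (E : Type*) : Type _ := E

instance {E : Type*} [AddCommGroup E] : AddCommGroup (Renormed E) :=
  inferInstanceAs (AddCommGroup E)

instance {𝕜 E : Type*} [Semiring 𝕜] [AddCommGroup E] [Module 𝕜 E] : Module 𝕜 (Renormed E) :=
  inferInstanceAs (Module 𝕜 E)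

theorem IsNorm.isCompact_setOf_le_one {𝕜 E : Type*} [NontriviallyNormedField 𝕜] [ProperSpace 𝕜]
    [NormedAddCommGroup E] [NormedSpace 𝕜 E] [FiniteDimensional 𝕜 E] {N : E → ℝ}
    (hN : IsNorm 𝕜 N) : IsCompact {x | N x ≤ 1} := by
  have hN' : IsNorm 𝕜 (E := Renormed E) N := hN
  let := hN'.toAddGroupNorm.toNormedAddCommGroup
  let : NormedSpace 𝕜 (Renormed E) := ⟨fun c x => (hN.smul c x).le⟩
  have : FiniteDimensional 𝕜 (Renormed E) := inferInstanceAs (FiniteDimensional 𝕜 E)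
  have : ProperSpace (Renormed E) := FiniteDimensional.proper 𝕜 _
  let ι : Renormed E →ₗ[𝕜] E := LinearMap.id
  convert (isCompact_closedBall (0 : Renormed E) 1).image ι.continuous_of_finiteDimensional
  ext x
  exact ⟨fun hx => ⟨x, mem_closedBall_zero_iff.mpr hx, rfl⟩,
    fun ⟨y, hy, hyx⟩ => hyx ▸ mem_closedBall_zero_iff.mp hy⟩

theorem norm_prod_smul_pow {ι 𝕜 : Type*} [Fintype ι] [NormedField 𝕜] (c : 𝕜) (z : ι → 𝕜)
    (α : ι → ℕ) : ‖∏ i, (c • z) i ^ α i‖ = ‖c‖ ^ (∑ i, α i) * ‖∏ i, z i ^ α i‖ := by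
  simp only [Pi.smul_apply, smul_eq_mul, mul_pow, Finset.prod_mul_distrib,
    Finset.prod_pow_eq_pow_sum, norm_mul, norm_pow]

theorem pow_mul_pow_le_of_add_le_one (m n : ℕ) {x y : ℝ} (hx : 0 ≤ x) (hy : 0 ≤ y)
    (hxy : x + y ≤ 1) :
    x ^ m * y ^ n ≤ (m : ℝ) ^ m * (n : ℝ) ^ n / ((m + n : ℕ) : ℝ) ^ (m + n) := by
  rcases Nat.eq_zero_or_pos (m + n) with hmn | hmn
  · obtain ⟨rfl, rfl⟩ : m = 0 ∧ n = 0 := by omega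
    simp
  set K : ℝ := ((m + n : ℕ) : ℝ)
  have hK : 0 < K := by positivity
  -- not an equality: for `j = 0` the left side is `0` since `u * K / 0 = 0`
  have hweight (j : ℕ) {u : ℝ} (hu : 0 ≤ u) : j / K * (u * K / j) ≤ u := by
    rw [show j / K * (u * K / j) = u * (j / j) * (K / K) by ring, div_self hK.ne', mul_one]
    exact mul_le_of_le_one_right hu (div_self_le_one _)
  have hexp (j : ℕ) (u : ℝ) (hu : 0 ≤ u) : (u ^ ((j : ℝ) / K)) ^ (m + n) = u ^ j := by
    rw [← Real.rpow_natCast, ← Real.rpow_mul hu, div_mul_cancel₀ _ hK.ne', Real.rpow_natCast]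
  -- weighted AM-GM with weights `m / K`, `n / K` at the points `x K / m`, `y K / n`
  have hamgm := Real.geom_mean_le_arith_mean2_weighted (w₁ := m / K) (w₂ := n / K)
    (p₁ := x * K / m) (p₂ := y * K / n) (by positivity) (by positivity) (by positivity)
    (by positivity) (by rw [← add_div, ← Nat.cast_add, div_self hK.ne'])
  have hprod : (x * K / m) ^ m * (y * K / n) ^ n ≤ 1 := by
    rw [← hexp m _ (by positivity), ← hexp n _ (by positivity), ← mul_pow]
    exact pow_le_one₀ (by positivity)
      (hamgm.trans ((add_le_add (hweight m hx) (hweight n hy)).trans hxy))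
  have hm : 0 < (m : ℝ) ^ m := by exact_mod_cast Nat.pow_self_pos
  have hn : 0 < (n : ℝ) ^ n := by exact_mod_cast Nat.pow_self_pos
  rw [div_pow, mul_pow, div_pow, mul_pow, div_mul_div_comm, div_le_one (by positivity)] at hprod
  rw [le_div_iff₀ (by positivity), pow_add]
  linarith

namespace IsNorm

variable {n : ℕ} {N : (Fin n → ℂ) → ℝ}

theorem isGreatest_deltaN (hN : IsNorm ℂ N) (α : Fin n → ℕ) :
    IsGreatest ((fun z => ‖∏ i, z i ^ α i‖) '' {z | N z ≤ 1}) (deltaN N α) := by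
  have hcont : Continuous fun z : Fin n → ℂ => ‖∏ i, z i ^ α i‖ := by fun_prop
  obtain ⟨d, hd⟩ := (hN.isCompact_setOf_le_one.image hcont).exists_isGreatest
    ⟨_, 0, show N 0 ≤ 1 by rw [hN.map_zero]; exact zero_le_one, rfl⟩
  rwa [deltaN, hd.csSup_eq]

theorem exists_norm_prod_pow_eq_deltaN (hN : IsNorm ℂ N) (α : Fin n → ℕ) :
    ∃ z, N z ≤ 1 ∧ ‖∏ i, z i ^ α i‖ = deltaN N α :=
  (hN.isGreatest_deltaN α).1

theorem deltaN_nonneg (hN : IsNorm ℂ N) (α : Fin n → ℕ) : 0 ≤ deltaN N α := by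
  obtain ⟨z, -, hz⟩ := hN.exists_norm_prod_pow_eq_deltaN α
  exact hz ▸ norm_nonneg _

theorem norm_prod_pow_le_mul_deltaN (hN : IsNorm ℂ N) (α : Fin n → ℕ) (w : Fin n → ℂ) :
    ‖∏ i, w i ^ α i‖ ≤ N w ^ (∑ i, α i) * deltaN N α := by
  obtain ⟨u, hu, hwu⟩ := hN.exists_eq_smul w
  calc ‖∏ i, w i ^ α i‖ = N w ^ (∑ i, α i) * ‖∏ i, u i ^ α i‖ := by
        conv_lhs => rw [hwu]
        rw [norm_prod_smul_pow, RCLike.norm_ofReal, abs_of_nonneg (hN.nonneg w)]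
    _ ≤ N w ^ (∑ i, α i) * deltaN N α :=
        mul_le_mul_of_nonneg_left ((hN.isGreatest_deltaN α).2 ⟨u, hu, rfl⟩)
          (pow_nonneg (hN.nonneg w) _)

end IsNorm

section Product

variable {n1 n2 : ℕ} {N1 : (Fin n1 → ℂ) → ℝ} {N2 : (Fin n2 → ℂ) → ℝ} {a1 a2 : ℝ}
  (α1 : Fin n1 → ℕ) (α2 : Fin n2 → ℕ)

theorem norm_prod_pow_mul_prod_pow_le (h1 : IsNorm ℂ N1) (h2 : IsNorm ℂ N2) (ha1 : 0 < a1)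
    (ha2 : 0 < a2) {p : (Fin n1 → ℂ) × (Fin n2 → ℂ)} (hp : a1 * N1 p.1 + a2 * N2 p.2 ≤ 1) :
    ‖(∏ i, p.1 i ^ α1 i) * ∏ j, p.2 j ^ α2 j‖ ≤
      ((∑ i, α1 i : ℕ) : ℝ) ^ (∑ i, α1 i) * ((∑ j, α2 j : ℕ) : ℝ) ^ (∑ j, α2 j) /
          (((∑ i, α1 i) + ∑ j, α2 j : ℕ) : ℝ) ^ ((∑ i, α1 i) + ∑ j, α2 j) *
        (deltaN N1 α1 * deltaN N2 α2 / (a1 ^ (∑ i, α1 i) * a2 ^ (∑ j, α2 j))) := by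
  have hδ1 := h1.deltaN_nonneg α1
  have hδ2 := h2.deltaN_nonneg α2
  calc ‖(∏ i, p.1 i ^ α1 i) * ∏ j, p.2 j ^ α2 j‖
      ≤ (N1 p.1 ^ (∑ i, α1 i) * deltaN N1 α1) * (N2 p.2 ^ (∑ j, α2 j) * deltaN N2 α2) := by
        rw [norm_mul]
        exact mul_le_mul (h1.norm_prod_pow_le_mul_deltaN α1 p.1)
          (h2.norm_prod_pow_le_mul_deltaN α2 p.2) (norm_nonneg _)
          (mul_nonneg (pow_nonneg (h1.nonneg _) _) hδ1)
    _ = (a1 * N1 p.1) ^ (∑ i, α1 i) * (a2 * N2 p.2) ^ (∑ j, α2 j) *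
          (deltaN N1 α1 * deltaN N2 α2 / (a1 ^ (∑ i, α1 i) * a2 ^ (∑ j, α2 j))) := by
        rw [mul_pow, mul_pow]
        field_simp
    _ ≤ _ := by
        gcongr
        exact pow_mul_pow_le_of_add_le_one _ _ (mul_nonneg ha1.le (h1.nonneg _))
          (mul_nonneg ha2.le (h2.nonneg _)) hp

theorem exists_norm_prod_pow_mul_prod_pow_eq (h1 : IsNorm ℂ N1) (h2 : IsNorm ℂ N2)
    (ha1 : 0 < a1) (ha2 : 0 < a2) :
    ∃ q : (Fin n1 → ℂ) × (Fin n2 → ℂ), a1 * N1 q.1 + a2 * N2 q.2 ≤ 1 ∧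
      ‖(∏ i, q.1 i ^ α1 i) * ∏ j, q.2 j ^ α2 j‖ =
      ((∑ i, α1 i : ℕ) : ℝ) ^ (∑ i, α1 i) * ((∑ j, α2 j : ℕ) : ℝ) ^ (∑ j, α2 j) /
          (((∑ i, α1 i) + ∑ j, α2 j : ℕ) : ℝ) ^ ((∑ i, α1 i) + ∑ j, α2 j) *
        (deltaN N1 α1 * deltaN N2 α2 / (a1 ^ (∑ i, α1 i) * a2 ^ (∑ j, α2 j))) := by
  obtain ⟨z1, hz1, hδ1⟩ := h1.exists_norm_prod_pow_eq_deltaN α1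
  obtain ⟨z2, hz2, hδ2⟩ := h2.exists_norm_prod_pow_eq_deltaN α2
  set k1 := ∑ i, α1 i
  set k2 := ∑ j, α2 j
  set K : ℝ := ((k1 + k2 : ℕ) : ℝ)
  -- `r₁ = t₁`, `r₂ = t₂` maximises `r₁ ^ k₁ * r₂ ^ k₂` subject to `a₁ r₁ + a₂ r₂ = 1`
  set t1 : ℝ := k1 / (a1 * K) with ht1
  set t2 : ℝ := k2 / (a2 * K) with ht2
  have ht1_nonneg : 0 ≤ t1 := by positivity
  have ht2_nonneg : 0 ≤ t2 := by positivity
  refine ⟨((t1 : ℂ) • z1, (t2 : ℂ) • z2), ?_, ?_⟩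
  · rw [h1.smul, h2.smul, Complex.norm_real, Complex.norm_real, Real.norm_of_nonneg ht1_nonneg,
      Real.norm_of_nonneg ht2_nonneg]
    calc a1 * (t1 * N1 z1) + a2 * (t2 * N2 z2) ≤ a1 * t1 + a2 * t2 := by
          gcongr
          · exact mul_le_of_le_one_right ht1_nonneg hz1
          · exact mul_le_of_le_one_right ht2_nonneg hz2
      _ = (k1 + k2) / K := by
          rw [ht1, ht2, mul_div_assoc', mul_div_assoc', mul_div_mul_left _ _ ha1.ne',
            mul_div_mul_left _ _ ha2.ne', add_div]
      _ ≤ 1 := by rw [← Nat.cast_add]; exact div_self_le_one _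
  · rw [norm_mul, norm_prod_smul_pow, norm_prod_smul_pow, hδ1, hδ2, Complex.norm_real,
      Complex.norm_real, Real.norm_of_nonneg ht1_nonneg, Real.norm_of_nonneg ht2_nonneg,
      ht1, ht2, div_pow, div_pow, mul_pow, mul_pow, pow_add]
    ring

end Product

/-- Computation of `δ_N(α)` for the norm `N(z¹,z²) = a₁N₁(z¹) + a₂N₂(z²)`. -/
theorem stmt3 {n1 n2 : ℕ} (N1 : (Fin n1 → ℂ) → ℝ) (N2 : (Fin n2 → ℂ) → ℝ)
    (hN1_add : ∀ x y, N1 (x + y) ≤ N1 x + N1 y)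
    (hN1_smul : ∀ (c : ℂ) (x), N1 (c • x) = ‖c‖ * N1 x)
    (hN1_def : ∀ x, N1 x = 0 → x = 0)
    (hN2_add : ∀ x y, N2 (x + y) ≤ N2 x + N2 y)
    (hN2_smul : ∀ (c : ℂ) (x), N2 (c • x) = ‖c‖ * N2 x)
    (hN2_def : ∀ x, N2 x = 0 → x = 0)
    (a1 a2 : ℝ) (ha1 : 0 < a1) (ha2 : 0 < a2)
    (α1 : Fin n1 → ℕ) (α2 : Fin n2 → ℕ) :
    deltaProd (fun p => a1 * N1 p.1 + a2 * N2 p.2) α1 α2 =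
      ((∑ i, α1 i : ℕ) : ℝ) ^ (∑ i, α1 i) * ((∑ j, α2 j : ℕ) : ℝ) ^ (∑ j, α2 j) /
          (((∑ i, α1 i) + ∑ j, α2 j : ℕ) : ℝ) ^ ((∑ i, α1 i) + ∑ j, α2 j) *
        (deltaN N1 α1 * deltaN N2 α2 / (a1 ^ (∑ i, α1 i) * a2 ^ (∑ j, α2 j))) := by
  have h1 : IsNorm ℂ N1 := ⟨hN1_add, hN1_smul, hN1_def⟩
  have h2 : IsNorm ℂ N2 := ⟨hN2_add, hN2_smul, hN2_def⟩
  obtain ⟨q, hq, hq_eq⟩ := exists_norm_prod_pow_mul_prod_pow_eq α1 α2 h1 h2 ha1 ha2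
  refine IsGreatest.csSup_eq ⟨⟨q, hq, hq_eq⟩, ?_⟩
  rintro _ ⟨p, hp, rfl⟩
  exact norm_prod_pow_mul_prod_pow_le α1 α2 h1 h2 ha1 ha2 hp
end

section
/- Let $\omega\ge 1$, $a_1,a_2>0$, and let $N_1$, $N_2$ be norms on $\mathbb{C}^{n_1}$, $\mathbb{C}^{n_2}$. Define $N(z^1,z^2)=(a_1N_1(z^1)^\omega+a_2N_2(z^2)^\omega)^{1/\omega}$. Then $N$ is a norm on $\mathbb{C}^{n_1}\times\mathbb{C}^{n_2}$, and for $\alpha=(\alpha^1,\alpha^2)$, $\delta_N(\alpha)=\Bigl(\frac{|\alpha^1|^{|\alpha^1|}|\alpha^2|^{|\alpha^2|}}{|\alpha|^{|\alpha|}\,a_1^{|\alpha^1|}a_2^{|\alpha^2|}}\Bigr)^{1/\omega}\,\delta_{N_1}(\alpha^1)\,\delta_{N_2}(\alpha^2)$ where $\delta_N(\alpha)=\max\{|z^\alpha| : N(z)\le 1\}$. -/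
section NormFacts
variable {n : ℕ} {N : (Fin n → ℂ) → ℝ}

lemma N_zero (hsmul : ∀ (c : ℂ) x, N (c • x) = ‖c‖ * N x) : N 0 = 0 := by
  have := hsmul 0 0; simpa using this

lemma N_nonneg (hadd : ∀ x y, N (x + y) ≤ N x + N y)
    (hsmul : ∀ (c : ℂ) x, N (c • x) = ‖c‖ * N x) (x : Fin n → ℂ) : 0 ≤ N x := by
  have h0 : N 0 = 0 := N_zero hsmul
  have h2 : N (-x) = N x := by have := hsmul (-1) x; simpa using this
  have h1 := hadd x (-x)
  rw [add_neg_cancel, h0, h2] at h1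
  linarith

lemma N_sum_le (hadd : ∀ x y, N (x + y) ≤ N x + N y)
    (h0 : N 0 = 0) {ι : Type*} (s : Finset ι) (g : ι → (Fin n → ℂ)) :
    N (∑ i ∈ s, g i) ≤ ∑ i ∈ s, N (g i) := by
  classical
  induction s using Finset.induction with
  | empty => simp [h0]
  | insert _ _ h ih =>
    rw [Finset.sum_insert h, Finset.sum_insert h]
    exact le_trans (hadd _ _) (by linarith)

lemma N_le_norm (hadd : ∀ x y, N (x + y) ≤ N x + N y)
    (hsmul : ∀ (c : ℂ) x, N (c • x) = ‖c‖ * N x) :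
    ∃ C : ℝ, 0 ≤ C ∧ ∀ z, N z ≤ C * ‖z‖ := by
  refine ⟨∑ i, N (fun j => if i = j then (1:ℂ) else 0), Finset.sum_nonneg fun i _ => N_nonneg hadd hsmul _, fun z => ?_⟩
  calc N z = N (∑ i, z i • fun j => if i = j then (1:ℂ) else 0) := by rw [← pi_eq_sum_univ z]
    _ ≤ ∑ i, N (z i • fun j => if i = j then (1:ℂ) else 0) := N_sum_le hadd (N_zero hsmul) _ _
    _ = ∑ i, ‖z i‖ * N (fun j => if i = j then (1:ℂ) else 0) := by
        simp only [hsmul]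
    _ ≤ ∑ i, ‖z‖ * N (fun j => if i = j then (1:ℂ) else 0) := by
        refine Finset.sum_le_sum fun i _ => ?_
        exact mul_le_mul_of_nonneg_right (norm_le_pi_norm z i) (N_nonneg hadd hsmul _)
    _ = (∑ i, N (fun j => if i = j then (1:ℂ) else 0)) * ‖z‖ := by
        rw [Finset.sum_mul]; exact Finset.sum_congr rfl fun i _ => mul_comm _ _

lemma N_cont (hadd : ∀ x y, N (x + y) ≤ N x + N y)
    (hsmul : ∀ (c : ℂ) x, N (c • x) = ‖c‖ * N x) : Continuous N := by
  obtain ⟨C, hC, hb⟩ := N_le_norm hadd hsmul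
  refine (LipschitzWith.of_dist_le_mul (K := C.toNNReal) fun x y => ?_).continuous
  rw [Real.dist_eq, Real.coe_toNNReal C hC, dist_eq_norm]
  have key : ∀ a b : Fin n → ℂ, N a - N b ≤ C * ‖a - b‖ := by
    intro a b
    have := hadd (a - b) b
    rw [sub_add_cancel] at this
    have := hb (a - b)
    linarith
  rw [abs_sub_le_iff]
  constructor
  · exact key x y
  · have := key y x
    rwa [norm_sub_rev] at this

lemma N_isCompact (hadd : ∀ x y, N (x + y) ≤ N x + N y)
    (hsmul : ∀ (c : ℂ) x, N (c • x) = ‖c‖ * N x)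
    (hdef : ∀ x, N x = 0 → x = 0) : IsCompact {z | N z ≤ 1} := by
  have hcont := N_cont hadd hsmul
  refine Metric.isCompact_of_isClosed_isBounded (isClosed_le hcont continuous_const) ?_
  rcases isEmpty_or_nonempty (Fin n) with he | hne
  · have : {z : Fin n → ℂ | N z ≤ 1} ⊆ {0} := fun z _ => Subsingleton.elim z 0
    exact (Set.finite_singleton (0 : Fin n → ℂ)).isBounded.subset this
  · -- sphere nonempty, N has positive min on it
    have hsn : (Metric.sphere (0 : Fin n → ℂ) 1).Nonempty := by
      refine ⟨fun _ => 1, ?_⟩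
      simp [Metric.mem_sphere, dist_zero_right]
    obtain ⟨z0, hz0s, hz0min⟩ := (isCompact_sphere (0 : Fin n → ℂ) 1).exists_isMinOn hsn
      hcont.continuousOn
    have hz0norm : ‖z0‖ = 1 := by simpa [Metric.mem_sphere, dist_zero_right] using hz0s
    have hc : 0 < N z0 := by
      rcases lt_or_eq_of_le (N_nonneg hadd hsmul z0) with h | h
      · exact h
      · exfalso
        have : z0 = 0 := hdef z0 h.symm
        rw [this, norm_zero] at hz0norm; norm_num at hz0norm
    have hlow : ∀ z : Fin n → ℂ, N z0 * ‖z‖ ≤ N z := by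
      intro z
      rcases eq_or_ne z 0 with rfl | hz
      · simp [N_zero hsmul]
      · have hnz : (0:ℝ) < ‖z‖ := norm_pos_iff.mpr hz
        set w : Fin n → ℂ := ((‖z‖⁻¹ : ℝ) : ℂ) • z with hw
        have hwnorm : ‖w‖ = 1 := by
          rw [hw, norm_smul]
          simp [abs_of_pos (inv_pos.mpr hnz), inv_mul_cancel₀ hnz.ne']
        have hwmem : w ∈ Metric.sphere (0 : Fin n → ℂ) 1 := by
          simp [Metric.mem_sphere, dist_zero_right, hwnorm]
        have hmin : N z0 ≤ N w := hz0min hwmem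
        have hNw : N w = ‖z‖⁻¹ * N z := by
          rw [hw, hsmul]; simp [abs_of_pos (inv_pos.mpr hnz)]
        rw [hNw] at hmin
        calc N z0 * ‖z‖ ≤ (‖z‖⁻¹ * N z) * ‖z‖ := by
              exact mul_le_mul_of_nonneg_right hmin hnz.le
          _ = N z := by field_simp
    refine Metric.isBounded_closedBall (x := (0 : Fin n → ℂ)) (r := (N z0)⁻¹) |>.subset ?_
    intro z hz
    simp only [Metric.mem_closedBall, dist_zero_right]
    have h1 : N z0 * ‖z‖ ≤ 1 := le_trans (hlow z) hz
    calc ‖z‖ = (N z0)⁻¹ * (N z0 * ‖z‖) := by field_simp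
      _ ≤ (N z0)⁻¹ * 1 := mul_le_mul_of_nonneg_left h1 (inv_nonneg.mpr hc.le)
      _ = (N z0)⁻¹ := mul_one _

end NormFacts
section DeltaFacts
variable {n : ℕ} {N : (Fin n → ℂ) → ℝ}

lemma deltaN_spec (hadd : ∀ x y, N (x + y) ≤ N x + N y)
    (hsmul : ∀ (c : ℂ) x, N (c • x) = ‖c‖ * N x)
    (hdef : ∀ x, N x = 0 → x = 0) (α : Fin n → ℕ) :
    (∃ z0, N z0 ≤ 1 ∧ ‖∏ i, z0 i ^ α i‖ = deltaN N α) ∧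
    (∀ z, N z ≤ 1 → ‖∏ i, z i ^ α i‖ ≤ deltaN N α) := by
  have hK : IsCompact {z : Fin n → ℂ | N z ≤ 1} := N_isCompact hadd hsmul hdef
  have hm : Continuous fun z : Fin n → ℂ => ‖∏ i, z i ^ α i‖ :=
    continuous_norm.comp (continuous_finset_prod _ fun i _ => (continuous_apply i).pow _)
  have hne : {z : Fin n → ℂ | N z ≤ 1}.Nonempty := ⟨0, by simp [N_zero hsmul]⟩
  have himg : IsCompact ((fun z : Fin n → ℂ => ‖∏ i, z i ^ α i‖) '' {z | N z ≤ 1}) :=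
    hK.image hm
  have hineg : ((fun z : Fin n → ℂ => ‖∏ i, z i ^ α i‖) '' {z | N z ≤ 1}).Nonempty :=
    hne.image _
  constructor
  · obtain ⟨z0, hz0, hval⟩ := himg.sSup_mem hineg
    exact ⟨z0, hz0, hval⟩
  · intro z hz
    exact le_csSup himg.bddAbove ⟨z, hz, rfl⟩

lemma deltaN_nonneg (hadd : ∀ x y, N (x + y) ≤ N x + N y)
    (hsmul : ∀ (c : ℂ) x, N (c • x) = ‖c‖ * N x)
    (hdef : ∀ x, N x = 0 → x = 0) (α : Fin n → ℕ) : 0 ≤ deltaN N α := by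
  obtain ⟨z0, _, hval⟩ := (deltaN_spec hadd hsmul hdef α).1
  rw [← hval]; exact norm_nonneg _

lemma monomial_smul (α : Fin n → ℕ) (t : ℝ) (ht : 0 ≤ t) (w : Fin n → ℂ) :
    ‖∏ i, (((t : ℂ) • w) i) ^ α i‖
      = t ^ (∑ i, α i) * ‖∏ i, w i ^ α i‖ := by
  have : ∏ i, (((t : ℂ) • w) i) ^ α i = (t:ℂ) ^ (∑ i, α i) * ∏ i, w i ^ α i := by
    simp only [Pi.smul_apply, smul_eq_mul, mul_pow]
    rw [Finset.prod_mul_distrib, Finset.prod_pow_eq_pow_sum]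
  rw [this, norm_mul, norm_pow, Complex.norm_real, Real.norm_eq_abs, abs_of_nonneg ht]

lemma deltaN_scale (hadd : ∀ x y, N (x + y) ≤ N x + N y)
    (hsmul : ∀ (c : ℂ) x, N (c • x) = ‖c‖ * N x)
    (hdef : ∀ x, N x = 0 → x = 0) (α : Fin n → ℕ) (z : Fin n → ℂ) :
    ‖∏ i, z i ^ α i‖ ≤ N z ^ (∑ i, α i) * deltaN N α := by
  obtain ⟨hspec1, hspec2⟩ := deltaN_spec hadd hsmul hdef α
  rcases (N_nonneg hadd hsmul z).lt_or_eq with ht | ht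
  · -- N z > 0
    set t := N z with htdef
    set w : Fin n → ℂ := ((t⁻¹ : ℝ) : ℂ) • z with hw
    have hNw : N w = 1 := by
      rw [hw, hsmul]
      simp only [Complex.norm_real, Real.norm_eq_abs]
      rw [abs_of_pos (inv_pos.mpr ht), inv_mul_cancel₀ ht.ne']
    have hz : z = (t : ℂ) • w := by
      rw [hw, smul_smul, ← Complex.ofReal_mul, mul_inv_cancel₀ ht.ne']
      simp
    calc ‖∏ i, z i ^ α i‖
        = t ^ (∑ i, α i) * ‖∏ i, w i ^ α i‖ := by
          rw [hz]; exact monomial_smul α t ht.le w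
      _ ≤ t ^ (∑ i, α i) * deltaN N α := by
          exact mul_le_mul_of_nonneg_left (hspec2 w hNw.le) (pow_nonneg ht.le _)
  · -- N z = 0, so z = 0
    have hz0 : z = 0 := hdef z ht.symm
    subst hz0
    rw [← ht]
    simp only [Pi.zero_apply]
    by_cases hk : (∑ i, α i) = 0
    · have hall : ∀ i, α i = 0 := fun i =>
        (Finset.sum_eq_zero_iff.mp hk) i (Finset.mem_univ i)
      rw [hk, pow_zero, one_mul]
      have hv := hspec2 0 (by rw [N_zero hsmul]; norm_num)
      simp only [Pi.zero_apply] at hv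
      simpa [hall] using hv
    · obtain ⟨i, hi⟩ : ∃ i, α i ≠ 0 := by
        by_contra h
        push_neg at h
        exact hk (Finset.sum_eq_zero fun i _ => h i)
      have hzero : (∏ i, (0:ℂ) ^ α i) = 0 :=
        Finset.prod_eq_zero (Finset.mem_univ i) (zero_pow hi)
      rw [hzero, norm_zero]
      exact mul_nonneg (pow_nonneg le_rfl _) (deltaN_nonneg hadd hsmul hdef α)

end DeltaFacts
lemma amgm2 (k1 k2 : ℕ) {u1 u2 : ℝ} (h1 : 0 ≤ u1) (h2 : 0 ≤ u2) (hs : u1 + u2 ≤ 1) :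
    u1 ^ k1 * u2 ^ k2 * ((k1 + k2 : ℕ) : ℝ) ^ (k1 + k2) ≤ (k1 : ℝ) ^ k1 * (k2 : ℝ) ^ k2 := by
  rcases Nat.eq_zero_or_pos k1 with rfl | hk1
  · simp only [pow_zero, one_mul, Nat.zero_add, zero_add]
    have hu2 : u2 ≤ 1 := by linarith
    calc u2 ^ k2 * (k2:ℝ) ^ k2 ≤ 1 * (k2:ℝ) ^ k2 :=
          mul_le_mul_of_nonneg_right (pow_le_one₀ h2 hu2) (pow_nonneg (Nat.cast_nonneg _) _)
      _ = (k2:ℝ) ^ k2 := one_mul _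
  rcases Nat.eq_zero_or_pos k2 with rfl | hk2
  · simp only [pow_zero, mul_one, Nat.add_zero, add_zero]
    have hu1 : u1 ≤ 1 := by linarith
    calc u1 ^ k1 * (k1:ℝ) ^ k1 ≤ 1 * (k1:ℝ) ^ k1 :=
          mul_le_mul_of_nonneg_right (pow_le_one₀ h1 hu1) (pow_nonneg (Nat.cast_nonneg _) _)
      _ = (k1:ℝ) ^ k1 := one_mul _
  -- both positive
  set k := k1 + k2 with hk
  have hkpos : 0 < (k : ℝ) := by positivity
  have hK1 : (0:ℝ) < k1 := by exact_mod_cast hk1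
  have hK2 : (0:ℝ) < k2 := by exact_mod_cast hk2
  set w1 : ℝ := (k1 : ℝ) / k with hw1
  set w2 : ℝ := (k2 : ℝ) / k with hw2
  have hw1p : 0 < w1 := div_pos hK1 hkpos
  have hw2p : 0 < w2 := div_pos hK2 hkpos
  have hwsum : w1 + w2 = 1 := by
    rw [hw1, hw2, ← add_div, hk]
    push_cast
    field_simp
  set p1 : ℝ := u1 / w1 with hp1
  set p2 : ℝ := u2 / w2 with hp2
  have hp1n : 0 ≤ p1 := div_nonneg h1 hw1p.le
  have hp2n : 0 ≤ p2 := div_nonneg h2 hw2p.le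
  have hG : p1 ^ w1 * p2 ^ w2 ≤ 1 := by
    calc p1 ^ w1 * p2 ^ w2 ≤ w1 * p1 + w2 * p2 :=
          Real.geom_mean_le_arith_mean2_weighted hw1p.le hw2p.le hp1n hp2n hwsum
      _ = u1 + u2 := by rw [hp1, hp2]; field_simp
      _ ≤ 1 := hs
  have hGk : p1 ^ k1 * p2 ^ k2 ≤ 1 := by
    have hpow : (p1 ^ w1 * p2 ^ w2) ^ k ≤ 1 :=
      pow_le_one₀ (mul_nonneg (Real.rpow_nonneg hp1n _) (Real.rpow_nonneg hp2n _)) hG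
    have hconv : (p1 ^ w1 * p2 ^ w2) ^ k = p1 ^ k1 * p2 ^ k2 := by
      rw [mul_pow, ← Real.rpow_natCast (p1 ^ w1) k, ← Real.rpow_natCast (p2 ^ w2) k,
        ← Real.rpow_mul hp1n, ← Real.rpow_mul hp2n]
      have e1 : w1 * (k:ℝ) = (k1:ℝ) := by rw [hw1]; field_simp
      have e2 : w2 * (k:ℝ) = (k2:ℝ) := by rw [hw2]; field_simp
      rw [e1, e2, Real.rpow_natCast, Real.rpow_natCast]
    rwa [hconv] at hpow
  have hu1 : u1 = w1 * p1 := by rw [hp1]; field_simp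
  have hu2 : u2 = w2 * p2 := by rw [hp2]; field_simp
  calc u1 ^ k1 * u2 ^ k2 * ((k:ℕ):ℝ) ^ k
      = (w1 ^ k1 * w2 ^ k2 * ((k:ℕ):ℝ) ^ k) * (p1 ^ k1 * p2 ^ k2) := by
        rw [hu1, hu2, mul_pow, mul_pow]; ring
    _ ≤ (w1 ^ k1 * w2 ^ k2 * ((k:ℕ):ℝ) ^ k) * 1 := by
        refine mul_le_mul_of_nonneg_left hGk ?_
        positivity
    _ = (k1:ℝ) ^ k1 * (k2:ℝ) ^ k2 := by
        rw [mul_one, hw1, hw2, div_pow, div_pow, hk]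
        push_cast
        rw [pow_add]
        field_simp

lemma mink2 {ω : ℝ} (hω : 1 ≤ ω) {x1 x2 y1 y2 : ℝ} (hx1 : 0 ≤ x1) (hx2 : 0 ≤ x2)
    (hy1 : 0 ≤ y1) (hy2 : 0 ≤ y2) :
    ((x1 + y1) ^ ω + (x2 + y2) ^ ω) ^ (1/ω) ≤
      (x1 ^ ω + x2 ^ ω) ^ (1/ω) + (y1 ^ ω + y2 ^ ω) ^ (1/ω) := by
  have := Real.Lp_add_le_of_nonneg (s := Finset.univ) (f := ![x1, x2]) (g := ![y1, y2]) hω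
    (by intro i _; fin_cases i <;> simpa) (by intro i _; fin_cases i <;> simpa)
  simpa [Fin.sum_univ_two] using this
lemma powcomm {t : ℝ} (ht : 0 ≤ t) (r : ℝ) (m : ℕ) : (t ^ m : ℝ) ^ r = (t ^ r) ^ m := by
  rw [← Real.rpow_natCast t m, ← Real.rpow_mul ht, mul_comm, Real.rpow_mul ht, Real.rpow_natCast]


set_option maxHeartbeats 1000000 in
/-- For `ω ≥ 1`, `N(z¹,z²) = (a₁N₁(z¹)^ω + a₂N₂(z²)^ω)^{1/ω}` is a norm on the product
space and `δ_N(α)` is computed from `δ_{N₁}(α¹)` and `δ_{N₂}(α²)`. -/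
theorem stmt5 {n1 n2 : ℕ} (N1 : (Fin n1 → ℂ) → ℝ) (N2 : (Fin n2 → ℂ) → ℝ)
    (hN1_add : ∀ x y, N1 (x + y) ≤ N1 x + N1 y)
    (hN1_smul : ∀ (c : ℂ) (x), N1 (c • x) = ‖c‖ * N1 x)
    (hN1_def : ∀ x, N1 x = 0 → x = 0)
    (hN2_add : ∀ x y, N2 (x + y) ≤ N2 x + N2 y)
    (hN2_smul : ∀ (c : ℂ) (x), N2 (c • x) = ‖c‖ * N2 x)
    (hN2_def : ∀ x, N2 x = 0 → x = 0)
    (ω : ℝ) (hω : 1 ≤ ω) (a1 a2 : ℝ) (ha1 : 0 < a1) (ha2 : 0 < a2)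
    (α1 : Fin n1 → ℕ) (α2 : Fin n2 → ℕ) :
    (∀ p q : (Fin n1 → ℂ) × (Fin n2 → ℂ),
      (a1 * N1 (p + q).1 ^ ω + a2 * N2 (p + q).2 ^ ω) ^ (1 / ω) ≤
        (a1 * N1 p.1 ^ ω + a2 * N2 p.2 ^ ω) ^ (1 / ω) +
        (a1 * N1 q.1 ^ ω + a2 * N2 q.2 ^ ω) ^ (1 / ω)) ∧
    (∀ (c : ℂ) (p : (Fin n1 → ℂ) × (Fin n2 → ℂ)),
      (a1 * N1 (c • p).1 ^ ω + a2 * N2 (c • p).2 ^ ω) ^ (1 / ω) =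
        ‖c‖ * (a1 * N1 p.1 ^ ω + a2 * N2 p.2 ^ ω) ^ (1 / ω)) ∧
    (∀ p : (Fin n1 → ℂ) × (Fin n2 → ℂ),
      (a1 * N1 p.1 ^ ω + a2 * N2 p.2 ^ ω) ^ (1 / ω) = 0 → p = 0) ∧
    deltaProd (fun p => (a1 * N1 p.1 ^ ω + a2 * N2 p.2 ^ ω) ^ (1 / ω)) α1 α2 =
      (((∑ i, α1 i : ℕ) : ℝ) ^ (∑ i, α1 i) * ((∑ j, α2 j : ℕ) : ℝ) ^ (∑ j, α2 j) /
          ((((∑ i, α1 i) + ∑ j, α2 j : ℕ) : ℝ) ^ ((∑ i, α1 i) + ∑ j, α2 j) *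
            a1 ^ (∑ i, α1 i) * a2 ^ (∑ j, α2 j))) ^ (1 / ω) *
        deltaN N1 α1 * deltaN N2 α2 := by
  have hω0 : (0:ℝ) < ω := lt_of_lt_of_le one_pos hω
  have hωne : ω ≠ 0 := hω0.ne'
  have hio : (0:ℝ) ≤ 1 / ω := by positivity
  have hn1 := N_nonneg hN1_add hN1_smul
  have hn2 := N_nonneg hN2_add hN2_smul
  have haux : ∀ b t : ℝ, 0 < b → 0 ≤ t → (b ^ (1/ω) * t) ^ ω = b * t ^ ω := by
    intro b t hb ht
    rw [Real.mul_rpow (Real.rpow_nonneg hb.le _) ht, ← Real.rpow_mul hb.le,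
      one_div_mul_cancel hωne, Real.rpow_one]
  have hEnn : ∀ p : (Fin n1 → ℂ) × (Fin n2 → ℂ), 0 ≤ a1 * N1 p.1 ^ ω + a2 * N2 p.2 ^ ω := by
    intro p
    have := hn1 p.1; have := hn2 p.2
    positivity
  refine ⟨?_, ?_, ?_, ?_⟩
  · -- triangle inequality
    intro p q
    have key1 : a1 * N1 (p + q).1 ^ ω ≤
        (a1 ^ (1/ω) * N1 p.1 + a1 ^ (1/ω) * N1 q.1) ^ ω := by
      rw [← mul_add, haux a1 _ ha1 (add_nonneg (hn1 p.1) (hn1 q.1))]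
      exact mul_le_mul_of_nonneg_left
        (Real.rpow_le_rpow (hn1 _) (hN1_add _ _) hω0.le) ha1.le
    have key2 : a2 * N2 (p + q).2 ^ ω ≤
        (a2 ^ (1/ω) * N2 p.2 + a2 ^ (1/ω) * N2 q.2) ^ ω := by
      rw [← mul_add, haux a2 _ ha2 (add_nonneg (hn2 p.2) (hn2 q.2))]
      exact mul_le_mul_of_nonneg_left
        (Real.rpow_le_rpow (hn2 _) (hN2_add _ _) hω0.le) ha2.le
    calc (a1 * N1 (p + q).1 ^ ω + a2 * N2 (p + q).2 ^ ω) ^ (1 / ω)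
        ≤ ((a1 ^ (1/ω) * N1 p.1 + a1 ^ (1/ω) * N1 q.1) ^ ω +
            (a2 ^ (1/ω) * N2 p.2 + a2 ^ (1/ω) * N2 q.2) ^ ω) ^ (1/ω) := by
          exact Real.rpow_le_rpow (hEnn _) (add_le_add key1 key2) hio
      _ ≤ ((a1 ^ (1/ω) * N1 p.1) ^ ω + (a2 ^ (1/ω) * N2 p.2) ^ ω) ^ (1/ω) +
            ((a1 ^ (1/ω) * N1 q.1) ^ ω + (a2 ^ (1/ω) * N2 q.2) ^ ω) ^ (1/ω) := by
          refine mink2 hω ?_ ?_ ?_ ?_ <;>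
            exact mul_nonneg (Real.rpow_nonneg (by positivity) _) (by first | exact hn1 _ | exact hn2 _)
      _ = (a1 * N1 p.1 ^ ω + a2 * N2 p.2 ^ ω) ^ (1 / ω) +
            (a1 * N1 q.1 ^ ω + a2 * N2 q.2 ^ ω) ^ (1 / ω) := by
          rw [haux a1 _ ha1 (hn1 _), haux a2 _ ha2 (hn2 _),
            haux a1 _ ha1 (hn1 _), haux a2 _ ha2 (hn2 _)]
  · -- homogeneity
    intro c p
    have e1 : (c • p).1 = c • p.1 := rfl
    have e2 : (c • p).2 = c • p.2 := rfl
    rw [e1, e2, hN1_smul, hN2_smul,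
      Real.mul_rpow (norm_nonneg c) (hn1 p.1),
      Real.mul_rpow (norm_nonneg c) (hn2 p.2)]
    have : a1 * (‖c‖ ^ ω * N1 p.1 ^ ω) + a2 * (‖c‖ ^ ω * N2 p.2 ^ ω)
        = ‖c‖ ^ ω * (a1 * N1 p.1 ^ ω + a2 * N2 p.2 ^ ω) := by ring
    rw [this, Real.mul_rpow (Real.rpow_nonneg (norm_nonneg c) _) (hEnn p),
      ← Real.rpow_mul (norm_nonneg c), mul_one_div_cancel hωne, Real.rpow_one]
  · -- definiteness
    intro p hp
    have hE0 : a1 * N1 p.1 ^ ω + a2 * N2 p.2 ^ ω = 0 := by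
      have := (Real.rpow_eq_zero (hEnn p) (by positivity : 1/ω ≠ 0)).mp hp
      exact this
    have h1n : 0 ≤ a1 * N1 p.1 ^ ω := mul_nonneg ha1.le (Real.rpow_nonneg (hn1 _) _)
    have h2n : 0 ≤ a2 * N2 p.2 ^ ω := mul_nonneg ha2.le (Real.rpow_nonneg (hn2 _) _)
    have h1 : a1 * N1 p.1 ^ ω = 0 := by linarith
    have h2 : a2 * N2 p.2 ^ ω = 0 := by linarith
    have h1' : N1 p.1 = 0 := by
      have : N1 p.1 ^ ω = 0 := by
        rcases mul_eq_zero.mp h1 with h | h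
        · exact absurd h ha1.ne'
        · exact h
      exact (Real.rpow_eq_zero (hn1 _) hωne).mp this
    have h2' : N2 p.2 = 0 := by
      have : N2 p.2 ^ ω = 0 := by
        rcases mul_eq_zero.mp h2 with h | h
        · exact absurd h ha2.ne'
        · exact h
      exact (Real.rpow_eq_zero (hn2 _) hωne).mp this
    exact Prod.ext (hN1_def _ h1') (hN2_def _ h2')
  · -- the delta computation
    obtain ⟨⟨z1, hz1mem, hz1val⟩, hub1⟩ := deltaN_spec hN1_add hN1_smul hN1_def α1
    obtain ⟨⟨z2, hz2mem, hz2val⟩, hub2⟩ := deltaN_spec hN2_add hN2_smul hN2_def α2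
    have hδ1n : 0 ≤ deltaN N1 α1 := deltaN_nonneg hN1_add hN1_smul hN1_def α1
    have hδ2n : 0 ≤ deltaN N2 α2 := deltaN_nonneg hN2_add hN2_smul hN2_def α2
    set k1 : ℕ := ∑ i, α1 i with hk1def
    set k2 : ℕ := ∑ j, α2 j with hk2def
    set K : ℝ := ((k1 + k2 : ℕ) : ℝ) with hKdef
    set C : ℝ := (k1:ℝ) ^ k1 * (k2:ℝ) ^ k2 / (K ^ (k1 + k2) * a1 ^ k1 * a2 ^ k2) with hCdef
    have hKpow : (0:ℝ) < K ^ (k1 + k2) := by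
      rcases Nat.eq_zero_or_pos (k1 + k2) with h | h
      · rw [h]; norm_num
      · have hK : (0:ℝ) < K := by rw [hKdef]; exact_mod_cast h
        positivity
    have hCnn : 0 ≤ C := by positivity
    set δ1 := deltaN N1 α1
    set δ2 := deltaN N2 α2
    set M : ℝ := C ^ (1/ω) * δ1 * δ2 with hMdef
    -- upper bound
    have hub : ∀ v ∈ (fun p : (Fin n1 → ℂ) × (Fin n2 → ℂ) =>
        ‖(∏ i, p.1 i ^ α1 i) * ∏ j, p.2 j ^ α2 j‖) ''
        {p | (a1 * N1 p.1 ^ ω + a2 * N2 p.2 ^ ω) ^ (1 / ω) ≤ 1}, v ≤ M := by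
      rintro v ⟨p, hp, rfl⟩
      have hE1 : a1 * N1 p.1 ^ ω + a2 * N2 p.2 ^ ω ≤ 1 := by
        have h := Real.rpow_le_one (Real.rpow_nonneg (hEnn p) _) hp hω0.le
        rwa [← Real.rpow_mul (hEnn p), one_div_mul_cancel hωne, Real.rpow_one] at h
      set t1 := N1 p.1 with ht1
      set t2 := N2 p.2 with ht2
      have ht1n : 0 ≤ t1 := hn1 p.1
      have ht2n : 0 ≤ t2 := hn2 p.2
      have hamgm := amgm2 k1 k2 (mul_nonneg ha1.le (Real.rpow_nonneg ht1n ω))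
        (mul_nonneg ha2.le (Real.rpow_nonneg ht2n ω)) hE1
      -- (t1^k1 * t2^k2)^ω ≤ C
      have hXω : ((t1 ^ k1 * t2 ^ k2 : ℝ)) ^ ω = (t1 ^ ω) ^ k1 * (t2 ^ ω) ^ k2 := by
        rw [Real.mul_rpow (pow_nonneg ht1n _) (pow_nonneg ht2n _), powcomm ht1n, powcomm ht2n]
      have hXC : (t1 ^ k1 * t2 ^ k2 : ℝ) ^ ω ≤ C := by
        rw [hXω, hCdef]
        have e1 : t1 ^ ω = (a1 * t1 ^ ω) / a1 := by field_simp
        have e2 : t2 ^ ω = (a2 * t2 ^ ω) / a2 := by field_simp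
        rw [e1, e2, div_pow, div_pow, div_mul_div_comm,
          div_le_div_iff₀ (by positivity) (by positivity)]
        calc (a1 * t1 ^ ω) ^ k1 * (a2 * t2 ^ ω) ^ k2 * (K ^ (k1 + k2) * a1 ^ k1 * a2 ^ k2)
            = ((a1 * t1 ^ ω) ^ k1 * (a2 * t2 ^ ω) ^ k2 * K ^ (k1 + k2)) * (a1 ^ k1 * a2 ^ k2) := by
              ring
          _ ≤ ((k1:ℝ) ^ k1 * (k2:ℝ) ^ k2) * (a1 ^ k1 * a2 ^ k2) := by
              refine mul_le_mul_of_nonneg_right ?_ (by positivity)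
              exact hamgm
          _ = (k1:ℝ) ^ k1 * (k2:ℝ) ^ k2 * (a1 ^ k1 * a2 ^ k2) := rfl
      have hXle : (t1 ^ k1 * t2 ^ k2 : ℝ) ≤ C ^ (1/ω) := by
        have hXn : (0:ℝ) ≤ t1 ^ k1 * t2 ^ k2 := by positivity
        calc (t1 ^ k1 * t2 ^ k2 : ℝ) = ((t1 ^ k1 * t2 ^ k2 : ℝ) ^ ω) ^ (1/ω) := by
              rw [← Real.rpow_mul hXn, mul_one_div_cancel hωne, Real.rpow_one]
          _ ≤ C ^ (1/ω) := Real.rpow_le_rpow (Real.rpow_nonneg hXn _) hXC hio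
      have hm1 : ‖∏ i, p.1 i ^ α1 i‖ ≤ t1 ^ k1 * δ1 :=
        deltaN_scale hN1_add hN1_smul hN1_def α1 p.1
      have hm2 : ‖∏ j, p.2 j ^ α2 j‖ ≤ t2 ^ k2 * δ2 :=
        deltaN_scale hN2_add hN2_smul hN2_def α2 p.2
      calc ‖(∏ i, p.1 i ^ α1 i) * ∏ j, p.2 j ^ α2 j‖
          = ‖∏ i, p.1 i ^ α1 i‖ * ‖∏ j, p.2 j ^ α2 j‖ := norm_mul _ _
        _ ≤ (t1 ^ k1 * δ1) * (t2 ^ k2 * δ2) := by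
            exact mul_le_mul hm1 hm2 (norm_nonneg _) (by positivity)
        _ = (t1 ^ k1 * t2 ^ k2) * (δ1 * δ2) := by ring
        _ ≤ C ^ (1/ω) * (δ1 * δ2) := by
            exact mul_le_mul_of_nonneg_right hXle (by positivity)
        _ = M := by rw [hMdef]; ring
    -- attainment
    set x1 : ℝ := (k1:ℝ) / (K * a1) with hx1
    set x2 : ℝ := (k2:ℝ) / (K * a2) with hx2
    have hx1n : 0 ≤ x1 := by positivity
    have hx2n : 0 ≤ x2 := by positivity
    set t1 : ℝ := x1 ^ (1/ω) with ht1
    set t2 : ℝ := x2 ^ (1/ω) with ht2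
    have ht1n : 0 ≤ t1 := Real.rpow_nonneg hx1n _
    have ht2n : 0 ≤ t2 := Real.rpow_nonneg hx2n _
    have ht1ω : t1 ^ ω = x1 := by
      rw [ht1, ← Real.rpow_mul hx1n, one_div_mul_cancel hωne, Real.rpow_one]
    have ht2ω : t2 ^ ω = x2 := by
      rw [ht2, ← Real.rpow_mul hx2n, one_div_mul_cancel hωne, Real.rpow_one]
    set p0 : (Fin n1 → ℂ) × (Fin n2 → ℂ) := (((t1:ℝ):ℂ) • z1, ((t2:ℝ):ℂ) • z2) with hp0
    have hN1p0 : N1 p0.1 = t1 * N1 z1 := by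
      rw [hp0, hN1_smul]
      simp [Complex.norm_real, abs_of_nonneg ht1n]
    have hN2p0 : N2 p0.2 = t2 * N2 z2 := by
      rw [hp0, hN2_smul]
      simp [Complex.norm_real, abs_of_nonneg ht2n]
    have hp0mem : (a1 * N1 p0.1 ^ ω + a2 * N2 p0.2 ^ ω) ^ (1 / ω) ≤ 1 := by
      have hb1 : a1 * N1 p0.1 ^ ω ≤ a1 * x1 := by
        rw [hN1p0, Real.mul_rpow ht1n (hn1 z1), ht1ω]
        have h1 : N1 z1 ^ ω ≤ 1 := Real.rpow_le_one (hn1 z1) hz1mem hω0.le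
        have hs := Real.rpow_nonneg (hn1 z1) ω
        have : x1 * N1 z1 ^ ω ≤ x1 := by nlinarith
        exact mul_le_mul_of_nonneg_left this ha1.le
      have hb2 : a2 * N2 p0.2 ^ ω ≤ a2 * x2 := by
        rw [hN2p0, Real.mul_rpow ht2n (hn2 z2), ht2ω]
        have h1 : N2 z2 ^ ω ≤ 1 := Real.rpow_le_one (hn2 z2) hz2mem hω0.le
        have hs := Real.rpow_nonneg (hn2 z2) ω
        have : x2 * N2 z2 ^ ω ≤ x2 := by nlinarith
        exact mul_le_mul_of_nonneg_left this ha2.le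
      have hax1 : a1 * x1 = (k1:ℝ) / K := by
        rw [hx1, ← div_div, mul_comm]
        exact div_mul_cancel₀ _ ha1.ne'
      have hax2 : a2 * x2 = (k2:ℝ) / K := by
        rw [hx2, ← div_div, mul_comm]
        exact div_mul_cancel₀ _ ha2.ne'
      have hsum : a1 * x1 + a2 * x2 ≤ 1 := by
        rw [hax1, hax2, ← add_div]
        rcases eq_or_ne K 0 with hK | hK
        · rw [hK]; simp
        · have : ((k1:ℝ) + (k2:ℝ)) = K := by rw [hKdef]; push_cast; ring
          rw [this, div_self hK]
      have : a1 * N1 p0.1 ^ ω + a2 * N2 p0.2 ^ ω ≤ 1 := by linarith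
      exact Real.rpow_le_one (hEnn p0) this hio
    have hval : ‖(∏ i, p0.1 i ^ α1 i) * ∏ j, p0.2 j ^ α2 j‖ = M := by
      rw [norm_mul]
      have e1 : ‖∏ i, p0.1 i ^ α1 i‖ = t1 ^ k1 * ‖∏ i, z1 i ^ α1 i‖ := by
        rw [hp0]; exact monomial_smul α1 t1 ht1n z1
      have e2 : ‖∏ j, p0.2 j ^ α2 j‖ = t2 ^ k2 * ‖∏ j, z2 j ^ α2 j‖ := by
        rw [hp0]; exact monomial_smul α2 t2 ht2n z2
      rw [e1, e2, hz1val, hz2val]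
      have hXC : (t1 ^ k1 * t2 ^ k2 : ℝ) = C ^ (1/ω) := by
        have c1 : t1 ^ k1 = (x1 ^ k1 : ℝ) ^ (1/ω) := by rw [powcomm hx1n, ht1]
        have c2 : t2 ^ k2 = (x2 ^ k2 : ℝ) ^ (1/ω) := by rw [powcomm hx2n, ht2]
        rw [c1, c2, ← Real.mul_rpow (pow_nonneg hx1n _) (pow_nonneg hx2n _)]
        congr 1
        rw [hx1, hx2, hCdef, div_pow, div_pow, mul_pow, mul_pow, div_mul_div_comm, pow_add]
        ring
      rw [hMdef, ← hXC]; ring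
    -- conclude
    have hmem : M ∈ (fun p : (Fin n1 → ℂ) × (Fin n2 → ℂ) =>
        ‖(∏ i, p.1 i ^ α1 i) * ∏ j, p.2 j ^ α2 j‖) ''
        {p | (a1 * N1 p.1 ^ ω + a2 * N2 p.2 ^ ω) ^ (1 / ω) ≤ 1} := ⟨p0, hp0mem, hval⟩
    have : deltaProd (fun p => (a1 * N1 p.1 ^ ω + a2 * N2 p.2 ^ ω) ^ (1 / ω)) α1 α2 = M := by
      rw [deltaProd]
      exact le_antisymm (csSup_le ⟨M, hmem⟩ hub) (le_csSup ⟨M, hub⟩ hmem)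
    rw [this, hMdef, hCdef]
end

section
/- Let $K\subset\mathbb{C}^n$ be compact, $\mathbf{dm}$ a Bernstein–Markov probability measure on $K$ (i.e. for all $\epsilon>0$ there is $C(\epsilon)$ with $\|p\|_K\le C(\epsilon)(1+\epsilon)^{\deg p}\|p\|_{L^2(\mathbf{dm})}$ for every polynomial $p$), and let $\mathbf{P}_d$ denote orthogonal projection in $L^2(\mathbf{dm})$ onto polynomials of degree $\le d$. Then for every continuous $f$ on $K$, $\limsup_{d\to\infty}\|f-\mathbf{P}_d(f)\|_K^{1/d} = \limsup_{d\to\infty}\mathrm{dist}(f,\mathcal{P}_d)^{1/d}$, where $\mathrm{dist}(f,\mathcal{P}_d)=\inf\{\|f-p\|_K : \deg p\le d\}$. -/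
open MeasureTheory

/-- Sup of `|g|` over a set `K`. -/
noncomputable def supOn {n : ℕ} (g : (Fin n → ℂ) → ℂ) (K : Set (Fin n → ℂ)) : ℝ :=
  sSup ((fun z => ‖g z‖) '' K)

/-- The `L²(μ)`-norm of `g` over `K`. -/
noncomputable def L2On {n : ℕ} (μ : Measure (Fin n → ℂ)) (K : Set (Fin n → ℂ))
    (g : (Fin n → ℂ) → ℂ) : ℝ :=
  (∫ z in K, ‖g z‖ ^ 2 ∂μ) ^ (1 / 2 : ℝ)

section Aux

variable {n : ℕ} {K : Set (Fin n → ℂ)} {μ : Measure (Fin n → ℂ)} {g h : (Fin n → ℂ) → ℂ}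

lemma supOn_nonneg : 0 ≤ supOn g K :=
  Real.sSup_nonneg (by rintro x ⟨z, _, rfl⟩; exact norm_nonneg _)

lemma abs_le_supOn (hK : IsCompact K) (hg : ContinuousOn g K) {z : Fin n → ℂ} (hz : z ∈ K) :
    ‖g z‖ ≤ supOn g K := by
  apply le_csSup
  · exact (hK.image_of_continuousOn (continuous_norm.comp_continuousOn hg)).bddAbove
  · exact ⟨z, hz, rfl⟩

lemma supOn_le (hKne : K.Nonempty) {M : ℝ} (hM : ∀ z ∈ K, ‖g z‖ ≤ M) :
    supOn g K ≤ M :=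
  csSup_le (hKne.image _) (by rintro x ⟨z, hz, rfl⟩; exact hM z hz)

lemma supOn_add_le (hK : IsCompact K) (hKne : K.Nonempty) (hg : ContinuousOn g K)
    (hh : ContinuousOn h K) :
    supOn (fun z => g z + h z) K ≤ supOn g K + supOn h K := by
  apply supOn_le hKne
  intro z hz
  exact (norm_add_le _ _).trans (add_le_add (abs_le_supOn hK hg hz) (abs_le_supOn hK hh hz))

lemma L2On_nonneg : 0 ≤ L2On μ K g :=
  Real.rpow_nonneg (integral_nonneg fun z => by positivity) _

lemma memL2 [IsFiniteMeasure μ] (hK : IsCompact K) (hg : ContinuousOn g K) :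
    MemLp g 2 (μ.restrict K) := by
  apply MemLp.of_bound (hg.aestronglyMeasurable hK.isClosed.measurableSet) (supOn g K)
  filter_upwards [ae_restrict_mem hK.isClosed.measurableSet] with z hz
  exact abs_le_supOn hK hg hz

lemma l2eq [IsFiniteMeasure μ] (hK : IsCompact K) (hg : ContinuousOn g K) :
    L2On μ K g = (eLpNorm g 2 (μ.restrict K)).toReal := by
  rw [(memL2 hK hg).eLpNorm_eq_integral_rpow_norm (by norm_num) (by norm_num)]
  rw [ENNReal.toReal_ofReal (by positivity)]
  unfold L2On
  norm_num

lemma L2On_add_le [IsFiniteMeasure μ] (hK : IsCompact K) (hg : ContinuousOn g K)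
    (hh : ContinuousOn h K) :
    L2On μ K (fun z => g z + h z) ≤ L2On μ K g + L2On μ K h := by
  rw [l2eq hK hg, l2eq hK hh, l2eq (g := fun z => g z + h z) hK (hg.add hh)]
  rw [← ENNReal.toReal_add (memL2 hK hg).eLpNorm_ne_top (memL2 hK hh).eLpNorm_ne_top]
  apply ENNReal.toReal_mono
  · exact ENNReal.add_ne_top.2 ⟨(memL2 hK hg).eLpNorm_ne_top, (memL2 hK hh).eLpNorm_ne_top⟩
  · exact eLpNorm_add_le (memL2 hK hg).aestronglyMeasurable (memL2 hK hh).aestronglyMeasurable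
      one_le_two

lemma L2On_sub_comm : L2On μ K (fun z => g z - h z) = L2On μ K (fun z => h z - g z) := by
  unfold L2On
  congr 1
  apply integral_congr_ae
  filter_upwards with z
  rw [norm_sub_rev]

lemma L2On_le_supOn [IsProbabilityMeasure μ] (hμsupp : μ Kᶜ = 0) (hK : IsCompact K)
    (hKne : K.Nonempty) (hg : ContinuousOn g K) :
    L2On μ K g ≤ supOn g K := by
  have hM : (0:ℝ) ≤ supOn g K := supOn_nonneg
  have hμK : μ K = 1 := by
    have h1 := measure_add_measure_compl (μ := μ) hK.isClosed.measurableSet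
    rw [hμsupp, add_zero, measure_univ] at h1
    exact h1
  have hcont : ContinuousOn (fun z => ‖g z‖ ^ 2) K :=
    (continuous_norm.comp_continuousOn hg).pow 2
  have hint : ∫ z in K, ‖g z‖ ^ 2 ∂μ ≤ supOn g K ^ 2 := by
    calc ∫ z in K, ‖g z‖ ^ 2 ∂μ ≤ ∫ _ in K, supOn g K ^ 2 ∂μ := by
          apply setIntegral_mono_on (hcont.integrableOn_compact hK)
            (integrableOn_const (by rw [hμK]; exact ENNReal.one_ne_top))
            hK.isClosed.measurableSet
          intro z hz
          exact pow_le_pow_left₀ (norm_nonneg _) (abs_le_supOn hK hg hz) 2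
      _ = supOn g K ^ 2 := by rw [setIntegral_const]; simp [Measure.real, hμK]
  calc L2On μ K g ≤ (supOn g K ^ 2) ^ (1/2 : ℝ) :=
        Real.rpow_le_rpow (integral_nonneg fun z => by positivity) hint (by norm_num)
    _ = supOn g K := by
        rw [← Real.rpow_natCast (supOn g K) 2, ← Real.rpow_mul hM]
        norm_num

lemma rpow_mul_pow {c t : ℝ} (hc : 0 ≤ c) (ht : 0 ≤ t) {d : ℕ} (hd : 1 ≤ d) :
    (c * t ^ d) ^ (1 / (d:ℝ)) = c ^ (1 / (d:ℝ)) * t := by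
  have hd0 : (d:ℝ) ≠ 0 := Nat.cast_ne_zero.2 (by omega)
  rw [Real.mul_rpow hc (pow_nonneg ht d), ← Real.rpow_natCast t d, ← Real.rpow_mul ht,
    mul_one_div, div_self hd0, Real.rpow_one]

end Aux

/-- For a Bernstein–Markov measure, the orthogonal (best `L²`) projections `P_d(f)` achieve
the same asymptotic rate of sup-norm approximation as the best uniform approximants. -/
theorem stmt13 {n : ℕ} (K : Set (Fin n → ℂ)) (hK : IsCompact K) (hKne : K.Nonempty)
    (μ : Measure (Fin n → ℂ)) [IsProbabilityMeasure μ] (hμsupp : μ Kᶜ = 0)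
    (hBM : ∀ ε : ℝ, 0 < ε → ∃ C : ℝ, 0 < C ∧ ∀ p : MvPolynomial (Fin n) ℂ,
      supOn (fun z => MvPolynomial.eval z p) K ≤
        C * (1 + ε) ^ p.totalDegree * L2On μ K (fun z => MvPolynomial.eval z p))
    (f : (Fin n → ℂ) → ℂ) (hf : ContinuousOn f K)
    (P : ℕ → MvPolynomial (Fin n) ℂ) (hPdeg : ∀ d, (P d).totalDegree ≤ d)
    (hPbest : ∀ (d : ℕ) (q : MvPolynomial (Fin n) ℂ), q.totalDegree ≤ d →
      L2On μ K (fun z => f z - MvPolynomial.eval z (P d)) ≤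
        L2On μ K (fun z => f z - MvPolynomial.eval z q)) :
    Filter.limsup (fun d : ℕ =>
        (supOn (fun z => f z - MvPolynomial.eval z (P d)) K) ^ (1 / (d : ℝ)))
      Filter.atTop =
    Filter.limsup (fun d : ℕ =>
        (sInf {r : ℝ | ∃ q : MvPolynomial (Fin n) ℂ, q.totalDegree ≤ d ∧
          r = supOn (fun z => f z - MvPolynomial.eval z q) K}) ^ (1 / (d : ℝ)))
      Filter.atTop := by
  classical
  let A : ℕ → ℝ := fun d => supOn (fun z => f z - MvPolynomial.eval z (P d)) K
  let B : ℕ → ℝ := fun d => sInf {r : ℝ | ∃ q : MvPolynomial (Fin n) ℂ, q.totalDegree ≤ d ∧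
          r = supOn (fun z => f z - MvPolynomial.eval z q) K}
  show Filter.limsup (fun d : ℕ => A d ^ (1 / (d : ℝ))) Filter.atTop =
    Filter.limsup (fun d : ℕ => B d ^ (1 / (d : ℝ))) Filter.atTop
  have hPc : ∀ p : MvPolynomial (Fin n) ℂ,
      ContinuousOn (fun z => MvPolynomial.eval z p) K :=
    fun p => (MvPolynomial.continuous_eval p).continuousOn
  have hSne : ∀ d : ℕ, {r : ℝ | ∃ q : MvPolynomial (Fin n) ℂ, q.totalDegree ≤ d ∧
      r = supOn (fun z => f z - MvPolynomial.eval z q) K}.Nonempty :=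
    fun d => ⟨_, P d, hPdeg d, rfl⟩
  have hSbb : ∀ d : ℕ, BddBelow {r : ℝ | ∃ q : MvPolynomial (Fin n) ℂ, q.totalDegree ≤ d ∧
      r = supOn (fun z => f z - MvPolynomial.eval z q) K} :=
    fun d => ⟨0, by rintro r ⟨q, -, rfl⟩; exact supOn_nonneg⟩
  have hA0 : ∀ d, 0 ≤ A d := fun d => supOn_nonneg
  have hB0 : ∀ d, 0 ≤ B d :=
    fun d => Real.sInf_nonneg (by rintro r ⟨q, -, rfl⟩; exact supOn_nonneg)
  have hBA : ∀ d, B d ≤ A d := fun d => csInf_le (hSbb d) ⟨P d, hPdeg d, rfl⟩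
  -- the key inequality
  have key : ∀ ε : ℝ, 0 < ε → ∀ C : ℝ, 0 < C →
      (∀ p : MvPolynomial (Fin n) ℂ, supOn (fun z => MvPolynomial.eval z p) K ≤
        C * (1 + ε) ^ p.totalDegree * L2On μ K (fun z => MvPolynomial.eval z p)) →
      ∀ d : ℕ, ∀ s : ℝ, 0 < s → A d ≤ (1 + 2*C*(1+ε)^d) * (B d + s) := by
    intro ε hε C hC hBMC d s hs
    obtain ⟨r, ⟨q, hqdeg, rfl⟩, hr⟩ := (csInf_lt_iff (hSbb d) (hSne d)).1
      (show B d < B d + s from lt_add_of_pos_right _ hs)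
    have hq : ContinuousOn (fun z => MvPolynomial.eval z q) K := hPc q
    have hPd : ContinuousOn (fun z => MvPolynomial.eval z (P d)) K := hPc (P d)
    have hfq : ContinuousOn (fun z => f z - MvPolynomial.eval z q) K := hf.sub hq
    have hsq0 : 0 ≤ supOn (fun z => f z - MvPolynomial.eval z q) K := supOn_nonneg
    have h1ε0 : (0:ℝ) ≤ (1+ε)^d := pow_nonneg (by linarith) d
    have h1 : A d ≤ supOn (fun z => f z - MvPolynomial.eval z q) K +
        supOn (fun z => MvPolynomial.eval z q - MvPolynomial.eval z (P d)) K := by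
      have heq : (fun z => f z - MvPolynomial.eval z (P d)) =
          fun z => (f z - MvPolynomial.eval z q) +
            (MvPolynomial.eval z q - MvPolynomial.eval z (P d)) := by
        funext z; ring
      show supOn (fun z => f z - MvPolynomial.eval z (P d)) K ≤ _
      rw [heq]
      exact supOn_add_le hK hKne hfq (hq.sub hPd)
    have hdeg : (q - P d).totalDegree ≤ d :=
      (MvPolynomial.totalDegree_sub q (P d)).trans (max_le hqdeg (hPdeg d))
    have h2 : supOn (fun z => MvPolynomial.eval z q - MvPolynomial.eval z (P d)) K ≤
        C * (1+ε)^d *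
          L2On μ K (fun z => MvPolynomial.eval z q - MvPolynomial.eval z (P d)) := by
      have hbm := hBMC (q - P d)
      simp only [map_sub] at hbm
      refine hbm.trans ?_
      apply mul_le_mul_of_nonneg_right ?_ L2On_nonneg
      exact mul_le_mul_of_nonneg_left (pow_le_pow_right₀ (by linarith) hdeg) hC.le
    have h3 : L2On μ K (fun z => MvPolynomial.eval z q - MvPolynomial.eval z (P d)) ≤
        2 * supOn (fun z => f z - MvPolynomial.eval z q) K := by
      have heq : (fun z => MvPolynomial.eval z q - MvPolynomial.eval z (P d)) =
          fun z => (MvPolynomial.eval z q - f z) +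
            (f z - MvPolynomial.eval z (P d)) := by funext z; ring
      have hcomm : L2On μ K (fun z => MvPolynomial.eval z q - f z) =
          L2On μ K (fun z => f z - MvPolynomial.eval z q) := L2On_sub_comm
      rw [heq]
      calc L2On μ K (fun z => (MvPolynomial.eval z q - f z) +
              (f z - MvPolynomial.eval z (P d)))
          ≤ L2On μ K (fun z => MvPolynomial.eval z q - f z) +
            L2On μ K (fun z => f z - MvPolynomial.eval z (P d)) :=
            L2On_add_le hK (hq.sub hf) (hf.sub hPd)
        _ ≤ L2On μ K (fun z => f z - MvPolynomial.eval z q) +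
            L2On μ K (fun z => f z - MvPolynomial.eval z q) := by
            rw [hcomm]
            exact add_le_add_right (hPbest d q hqdeg) _
        _ ≤ supOn (fun z => f z - MvPolynomial.eval z q) K +
            supOn (fun z => f z - MvPolynomial.eval z q) K :=
            add_le_add (L2On_le_supOn hμsupp hK hKne hfq) (L2On_le_supOn hμsupp hK hKne hfq)
        _ = 2 * supOn (fun z => f z - MvPolynomial.eval z q) K := by ring
    have hCd : (0:ℝ) ≤ C * (1+ε)^d := mul_nonneg hC.le h1ε0
    calc A d ≤ supOn (fun z => f z - MvPolynomial.eval z q) K +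
          C * (1+ε)^d * (2 * supOn (fun z => f z - MvPolynomial.eval z q) K) :=
          h1.trans (add_le_add_right (h2.trans (mul_le_mul_of_nonneg_left h3 hCd)) _)
      _ = (1 + 2*C*(1+ε)^d) * supOn (fun z => f z - MvPolynomial.eval z q) K := by ring
      _ ≤ (1 + 2*C*(1+ε)^d) * (B d + s) := by
          apply mul_le_mul_of_nonneg_left hr.le
          nlinarith
  -- boundedness of the sequences
  obtain ⟨C₁, hC₁, hBMC₁⟩ := hBM 1 one_pos
  have hM₀ : 0 ≤ supOn (fun z => f z -
      MvPolynomial.eval z (0 : MvPolynomial (Fin n) ℂ)) K := supOn_nonneg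
  set M₀ := supOn (fun z => f z - MvPolynomial.eval z (0 : MvPolynomial (Fin n) ℂ)) K with hM₀def
  have hBM₀ : ∀ d, B d ≤ M₀ := fun d => csInf_le (hSbb d) ⟨0, by simp, rfl⟩
  set D := (1 + 2*C₁) * (M₀ + 1) with hDdef
  have hD1 : 1 ≤ D := by nlinarith
  have hAD : ∀ d, A d ≤ D * 2^d := by
    intro d
    have h2d : (1:ℝ) ≤ 2^d := one_le_pow₀ (by norm_num)
    have hk := key 1 one_pos C₁ hC₁ hBMC₁ d 1 one_pos
    have h21 : ((1:ℝ)+1) = 2 := by norm_num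
    rw [h21] at hk
    have hBd := hBM₀ d
    have hB0d := hB0 d
    have h1 : A d ≤ (1 + 2*C₁*2^d) * (M₀ + 1) := by
      refine hk.trans (mul_le_mul_of_nonneg_left (by linarith) ?_)
      nlinarith
    have h2 : (1 + 2*C₁*2^d) * (M₀ + 1) ≤ D * 2^d := by
      rw [hDdef]
      nlinarith
    linarith
  have hArp : ∀ d : ℕ, 1 ≤ d → A d ^ (1/(d:ℝ)) ≤ 2*D := by
    intro d hd
    have hd0 : (0:ℝ) < d := by exact_mod_cast hd
    calc A d ^ (1/(d:ℝ)) ≤ (D * 2^d) ^ (1/(d:ℝ)) :=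
          Real.rpow_le_rpow (hA0 d) (hAD d) (by positivity)
      _ = D ^ (1/(d:ℝ)) * 2 := rpow_mul_pow (by linarith) (by norm_num) hd
      _ ≤ D * 2 := by
          have hle : D ^ (1/(d:ℝ)) ≤ D ^ (1:ℝ) :=
            Real.rpow_le_rpow_of_exponent_le hD1 (by
              rw [div_le_one hd0]; exact_mod_cast hd)
          rw [Real.rpow_one] at hle
          nlinarith
      _ = 2*D := by ring
  have hAbdd : Filter.IsBoundedUnder (· ≤ ·) Filter.atTop (fun d : ℕ => A d ^ (1/(d:ℝ))) :=
    ⟨2*D, Filter.eventually_map.2 (by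
      filter_upwards [Filter.eventually_ge_atTop 1] with d hd using hArp d hd)⟩
  have hBArp : ∀ d : ℕ, B d ^ (1/(d:ℝ)) ≤ A d ^ (1/(d:ℝ)) :=
    fun d => Real.rpow_le_rpow (hB0 d) (hBA d) (by positivity)
  have hBbdd : Filter.IsBoundedUnder (· ≤ ·) Filter.atTop (fun d : ℕ => B d ^ (1/(d:ℝ))) :=
    ⟨2*D, Filter.eventually_map.2 (by
      filter_upwards [Filter.eventually_ge_atTop 1] with d hd using
        (hBArp d).trans (hArp d hd))⟩
  have hAcb : Filter.IsCoboundedUnder (· ≤ ·) Filter.atTop (fun d : ℕ => A d ^ (1/(d:ℝ))) :=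
    Filter.isCoboundedUnder_le_of_le Filter.atTop (fun d => Real.rpow_nonneg (hA0 d) _)
  have hBcb : Filter.IsCoboundedUnder (· ≤ ·) Filter.atTop (fun d : ℕ => B d ^ (1/(d:ℝ))) :=
    Filter.isCoboundedUnder_le_of_le Filter.atTop (fun d => Real.rpow_nonneg (hB0 d) _)
  apply le_antisymm
  · -- the hard direction
    apply le_of_forall_gt_imp_ge_of_dense
    intro x hx
    have hL0 : 0 ≤ Filter.limsup (fun d : ℕ => B d ^ (1/(d:ℝ))) Filter.atTop :=
      Filter.le_limsup_of_frequently_le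
        (Filter.Frequently.of_forall fun d => Real.rpow_nonneg (hB0 d) _) hBbdd
    set L := Filter.limsup (fun d : ℕ => B d ^ (1/(d:ℝ))) Filter.atTop with hLdef
    have hx0 : 0 < x := lt_of_le_of_lt hL0 hx
    set m := (L + x)/2 with hmdef
    have hm0 : 0 < m := by rw [hmdef]; linarith
    have hLm : L < m := by rw [hmdef]; linarith
    have hmx : m < x := by rw [hmdef]; linarith
    set ε := (x - m)/(m+1) with hεdef
    have hm1 : (0:ℝ) < m + 1 := by linarith
    have hε : 0 < ε := div_pos (by linarith) hm1
    have hεm : (1+ε)*m < x := by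
      have h1 : ε * m = (x - m) * (m / (m+1)) := by rw [hεdef]; field_simp
      have h2 : m / (m+1) < 1 := (div_lt_one hm1).2 (by linarith)
      nlinarith
    obtain ⟨C, hC, hBMC⟩ := hBM ε hε
    have h24 : (0:ℝ) < 2+4*C := by linarith
    have htend : Filter.Tendsto (fun d : ℕ => (2+4*C) ^ (1/(d:ℝ)) * ((1+ε)*m))
        Filter.atTop (nhds ((1+ε)*m)) := by
      have hlog : Filter.Tendsto (fun d : ℕ => Real.log (2+4*C) * (1/(d:ℝ)))
          Filter.atTop (nhds 0) := by
        simpa using tendsto_one_div_atTop_nhds_zero_nat.const_mul (Real.log (2+4*C))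
      have h1 : Filter.Tendsto (fun d : ℕ => (2+4*C)^(1/(d:ℝ))) Filter.atTop (nhds 1) := by
        have h2 := (Real.continuous_exp.tendsto 0).comp hlog
        rw [Real.exp_zero] at h2
        exact h2.congr fun d => (Real.rpow_def_of_pos h24 _).symm
      simpa using h1.mul_const ((1+ε)*m)
    have hev := Filter.eventually_lt_of_limsup_lt hLm hBbdd
    have hevx := htend.eventually_lt_const hεm
    apply Filter.limsup_le_of_le hAcb
    filter_upwards [hev, hevx, Filter.eventually_ge_atTop 1] with d hBlt hux hd1
    have hd0 : (d:ℝ) ≠ 0 := Nat.cast_ne_zero.2 (by omega)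
    have hBle : B d ≤ m ^ d := by
      have hBeq : B d = (B d ^ (1/(d:ℝ))) ^ d := by
        rw [← Real.rpow_natCast (B d ^ (1/(d:ℝ))) d, ← Real.rpow_mul (hB0 d),
          one_div, inv_mul_cancel₀ hd0, Real.rpow_one]
      rw [hBeq]
      exact pow_le_pow_left₀ (Real.rpow_nonneg (hB0 d) _) hBlt.le d
    have hkd := key ε hε C hC hBMC d (m^d) (by positivity)
    have h1ε1 : (1:ℝ) ≤ (1+ε)^d := one_le_pow₀ (by linarith)
    have hmd0 : (0:ℝ) ≤ m^d := by positivity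
    have hAle : A d ≤ (2+4*C) * ((1+ε)*m)^d := by
      have hstep : A d ≤ (1 + 2*C*(1+ε)^d) * (2*m^d) := by
        refine hkd.trans (mul_le_mul_of_nonneg_left (by linarith) ?_)
        nlinarith
      calc A d ≤ (1 + 2*C*(1+ε)^d) * (2*m^d) := hstep
        _ ≤ ((1+2*C)*(1+ε)^d) * (2*m^d) := by
            apply mul_le_mul_of_nonneg_right ?_ (by positivity)
            nlinarith
        _ = (2+4*C) * ((1+ε)*m)^d := by rw [mul_pow]; ring
    calc A d ^ (1/(d:ℝ)) ≤ ((2+4*C) * ((1+ε)*m)^d) ^ (1/(d:ℝ)) :=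
          Real.rpow_le_rpow (hA0 d) hAle (by positivity)
      _ = (2+4*C)^(1/(d:ℝ)) * ((1+ε)*m) := rpow_mul_pow h24.le (by positivity) hd1
      _ ≤ x := hux.le
  · exact Filter.limsup_le_limsup
      (Filter.Eventually.of_forall fun d => hBArp d) hBcb hAbdd
end

section
/- Let $\mu_1$, $\mu_2$ be probability measures on compact sets $K_1\subset\mathbb{C}^{n_1}$, $K_2\subset\mathbb{C}^{n_2}$, each satisfying the Bernstein–Markov property. Then the product measure $\mu_1\times\mu_2$ on $K_1\times K_2$ satisfies the Bernstein–Markov property: for all $\epsilon>0$ there is $C(\epsilon)$ with $\|p\|_{K_1\times K_2}\le C(\epsilon)(1+\epsilon)^{\deg p}\|p\|_{L^2(\mu_1\times\mu_2)}$ for every polynomial $p$ on $\mathbb{C}^{n_1+n_2}$. -/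
/-!
Fix `(x, y) ∈ K₁ × K₂` and `δ` with `(1 + δ)² = 1 + ε`. Applying the Bernstein–Markov inequality of
`μ₁` to the partial evaluation `w ↦ p(w, y)` bounds `|p(x, y)|²` by `C₁²(1 + δ)^{2d} ∫ |p(w, y)|² dμ₁(w)`;
applying that of `μ₂` to `v ↦ p(w, v)` bounds each `|p(w, y)|²` by `C₂²(1 + δ)^{2d} ∫ |p(w, v)|² dμ₂(v)`.
Partial evaluation does not raise the total degree, so integrating the second bound in `w` and using
Fubini gives the claim with constant `C₁C₂`.
-/

open MeasureTheory

namespace MvPolynomial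

variable {R σ τ : Type*} [CommSemiring R]

theorem totalDegree_X_le (i : σ) : (X i : MvPolynomial σ R).totalDegree ≤ 1 :=
  (totalDegree_monomial_le _ _).trans (by simp)

theorem totalDegree_aeval_le_of_totalDegree_le_one (g : σ → MvPolynomial τ R)
    (hg : ∀ i, (g i).totalDegree ≤ 1) (p : MvPolynomial σ R) :
    (aeval g p).totalDegree ≤ p.totalDegree := by
  conv_lhs => rw [p.as_sum, map_sum]
  refine (totalDegree_finsetSum _ _).trans (Finset.sup_le fun s hs => ?_)
  rw [aeval_monomial, Finsupp.prod]
  calc _ ≤ (algebraMap R (MvPolynomial τ R) (coeff s p)).totalDegree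
        + (∏ i ∈ s.support, g i ^ s i).totalDegree := totalDegree_mul _ _
    _ ≤ 0 + ∑ i ∈ s.support, s i * 1 := by
        gcongr
        · exact (totalDegree_C _).le
        · refine (totalDegree_finsetProd _ _).trans (Finset.sum_le_sum fun i _ => ?_)
          exact (totalDegree_pow _ _).trans (Nat.mul_le_mul_left _ (hg i))
    _ ≤ p.totalDegree := by
        simp only [zero_add, mul_one]
        exact le_totalDegree hs

noncomputable def evalRight (y : τ → R) : MvPolynomial (σ ⊕ τ) R →ₐ[R] MvPolynomial σ R :=
  aeval (Sum.elim X (C ∘ y))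

noncomputable def evalLeft (x : σ → R) : MvPolynomial (σ ⊕ τ) R →ₐ[R] MvPolynomial τ R :=
  aeval (Sum.elim (C ∘ x) X)

@[simp]
theorem eval_evalRight (x : σ → R) (y : τ → R) (p : MvPolynomial (σ ⊕ τ) R) :
    eval x (evalRight y p) = eval (Sum.elim x y) p := by
  rw [← aeval_eq_eval, evalRight, comp_aeval_apply, ← aeval_eq_eval]
  congr 2
  ext (i | i) <;> simp

@[simp]
theorem eval_evalLeft (x : σ → R) (y : τ → R) (p : MvPolynomial (σ ⊕ τ) R) :
    eval y (evalLeft x p) = eval (Sum.elim x y) p := by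
  rw [← aeval_eq_eval, evalLeft, comp_aeval_apply, ← aeval_eq_eval]
  congr 2
  ext (i | i) <;> simp

theorem totalDegree_evalRight_le (y : τ → R) (p : MvPolynomial (σ ⊕ τ) R) :
    (evalRight y p).totalDegree ≤ p.totalDegree :=
  totalDegree_aeval_le_of_totalDegree_le_one _ (by rintro (i | i) <;> simp [totalDegree_X_le]) p

theorem totalDegree_evalLeft_le (x : σ → R) (p : MvPolynomial (σ ⊕ τ) R) :
    (evalLeft x p).totalDegree ≤ p.totalDegree :=
  totalDegree_aeval_le_of_totalDegree_le_one _ (by rintro (i | i) <;> simp [totalDegree_X_le]) p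

end MvPolynomial

open MvPolynomial

theorem integral_slice_le_mul_integral_prod {α β : Type*} [MeasurableSpace α] [MeasurableSpace β]
    {μ : Measure α} {ν : Measure β} [SFinite μ] [SFinite ν] {F : α × β → ℝ} (hF : 0 ≤ F)
    (hint : Integrable F (μ.prod ν)) {y : β} {B : ℝ}
    (h : ∀ x, F (x, y) ≤ B * ∫ v, F (x, v) ∂ν) :
    ∫ x, F (x, y) ∂μ ≤ B * ∫ z, F z ∂(μ.prod ν) := by
  rw [integral_prod F hint, ← integral_const_mul]
  exact integral_mono_of_nonneg (ae_of_all _ fun x => hF _)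
    (hint.integral_prod_left.const_mul B) (ae_of_all _ h)

theorem le_mul_rpow_half_of_sq_le {a c I : ℝ} (hc : 0 ≤ c) (h : a ^ 2 ≤ c ^ 2 * I) :
    a ≤ c * I ^ (1 / 2 : ℝ) := by
  rw [← Real.sqrt_eq_rpow]
  calc a ≤ |a| := le_abs_self a
    _ ≤ √(c ^ 2 * I) := Real.abs_le_sqrt h
    _ = c * √I := by rw [Real.sqrt_mul (sq_nonneg c), Real.sqrt_sq hc]

theorem sq_norm_eval_le_of_bernsteinMarkov {σ : Type*} [MeasurableSpace (σ → ℂ)]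
    {K : Set (σ → ℂ)} (hK : IsCompact K) {μ : Measure (σ → ℂ)} {C δ : ℝ} (hC : 0 ≤ C)
    (hδ : 0 ≤ δ)
    (hBM : ∀ q : MvPolynomial σ ℂ, sSup ((fun z => ‖eval z q‖) '' K) ≤
      C * (1 + δ) ^ q.totalDegree * (∫ z in K, ‖eval z q‖ ^ 2 ∂μ) ^ (1 / 2 : ℝ))
    {q : MvPolynomial σ ℂ} {d : ℕ} (hq : q.totalDegree ≤ d) {x : σ → ℂ} (hx : x ∈ K) :
    ‖eval x q‖ ^ 2 ≤ (C * (1 + δ) ^ d) ^ 2 * ∫ z in K, ‖eval z q‖ ^ 2 ∂μ := by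
  have hbdd : BddAbove ((fun z => ‖eval z q‖) '' K) :=
    (hK.image (continuous_norm.comp (continuous_eval q))).bddAbove
  have hI : 0 ≤ ∫ z in K, ‖eval z q‖ ^ 2 ∂μ := by positivity
  have hx_le : ‖eval x q‖ ≤ C * (1 + δ) ^ d * √(∫ z in K, ‖eval z q‖ ^ 2 ∂μ) := by
    rw [Real.sqrt_eq_rpow]
    refine (le_csSup hbdd (Set.mem_image_of_mem _ hx)).trans ((hBM q).trans ?_)
    gcongr
    linarith
  calc ‖eval x q‖ ^ 2 ≤ (C * (1 + δ) ^ d * √(∫ z in K, ‖eval z q‖ ^ 2 ∂μ)) ^ 2 := by gcongr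
    _ = _ := by rw [mul_pow, Real.sq_sqrt hI]

theorem sq_norm_eval_sumElim_le {σ τ : Type*} [Countable σ] [Countable τ]
    {K1 : Set (σ → ℂ)} {K2 : Set (τ → ℂ)} (hK1 : IsCompact K1) (hK2 : IsCompact K2)
    {μ1 : Measure (σ → ℂ)} {μ2 : Measure (τ → ℂ)} [IsFiniteMeasure μ1] [IsFiniteMeasure μ2]
    {C1 C2 δ : ℝ} (hC1 : 0 ≤ C1) (hC2 : 0 ≤ C2) (hδ : 0 ≤ δ)
    (hBM1 : ∀ q : MvPolynomial σ ℂ, sSup ((fun z => ‖eval z q‖) '' K1) ≤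
      C1 * (1 + δ) ^ q.totalDegree * (∫ z in K1, ‖eval z q‖ ^ 2 ∂μ1) ^ (1 / 2 : ℝ))
    (hBM2 : ∀ q : MvPolynomial τ ℂ, sSup ((fun z => ‖eval z q‖) '' K2) ≤
      C2 * (1 + δ) ^ q.totalDegree * (∫ z in K2, ‖eval z q‖ ^ 2 ∂μ2) ^ (1 / 2 : ℝ))
    (p : MvPolynomial (σ ⊕ τ) ℂ) {x : σ → ℂ} {y : τ → ℂ} (hx : x ∈ K1) (hy : y ∈ K2) :
    ‖eval (Sum.elim x y) p‖ ^ 2 ≤ (C1 * C2 * ((1 + δ) ^ 2) ^ p.totalDegree) ^ 2 *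
      ∫ z in K1 ×ˢ K2, ‖eval (Sum.elim z.1 z.2) p‖ ^ 2 ∂(μ1.prod μ2) := by
  set F : (σ → ℂ) × (τ → ℂ) → ℝ := fun z => ‖eval (Sum.elim z.1 z.2) p‖ ^ 2
  have hF : Continuous F := by
    refine ((continuous_eval p).comp (continuous_pi fun i => ?_)).norm.pow 2
    rcases i with i | i
    exacts [(continuous_apply i).comp continuous_fst, (continuous_apply i).comp continuous_snd]
  have hint : Integrable F ((μ1.restrict K1).prod (μ2.restrict K2)) := by
    rw [Measure.prod_restrict]
    exact hF.continuousOn.integrableOn_compact (hK1.prod hK2)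
  have hslice : ∀ w, F (w, y) ≤ (C2 * (1 + δ) ^ p.totalDegree) ^ 2 * ∫ v in K2, F (w, v) ∂μ2 :=
    fun w => by
      simpa only [eval_evalLeft] using
        sq_norm_eval_le_of_bernsteinMarkov hK2 hC2 hδ hBM2 (totalDegree_evalLeft_le w p) hy
  calc ‖eval (Sum.elim x y) p‖ ^ 2
      ≤ (C1 * (1 + δ) ^ p.totalDegree) ^ 2 * ∫ w in K1, F (w, y) ∂μ1 := by
        simpa only [eval_evalRight] using
          sq_norm_eval_le_of_bernsteinMarkov hK1 hC1 hδ hBM1 (totalDegree_evalRight_le y p) hx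
    _ ≤ (C1 * (1 + δ) ^ p.totalDegree) ^ 2 * ((C2 * (1 + δ) ^ p.totalDegree) ^ 2 *
          ∫ z, F z ∂((μ1.restrict K1).prod (μ2.restrict K2))) := by
        gcongr
        exact integral_slice_le_mul_integral_prod (fun _ => sq_nonneg _) hint hslice
    _ = _ := by rw [Measure.prod_restrict, ← pow_mul]; ring

theorem stmt15_general {n1 n2 : ℕ}
    (K1 : Set (Fin n1 → ℂ)) (K2 : Set (Fin n2 → ℂ))
    (hK1 : IsCompact K1) (hK2 : IsCompact K2)
    (μ1 : Measure (Fin n1 → ℂ)) (μ2 : Measure (Fin n2 → ℂ))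
    [IsProbabilityMeasure μ1] [IsProbabilityMeasure μ2]
    (hBM1 : ∀ ε : ℝ, 0 < ε → ∃ C : ℝ, 0 < C ∧ ∀ p : MvPolynomial (Fin n1) ℂ,
      sSup ((fun z => ‖MvPolynomial.eval z p‖) '' K1) ≤
        C * (1 + ε) ^ p.totalDegree *
          (∫ z in K1, ‖MvPolynomial.eval z p‖ ^ 2 ∂μ1) ^ (1 / 2 : ℝ))
    (hBM2 : ∀ ε : ℝ, 0 < ε → ∃ C : ℝ, 0 < C ∧ ∀ p : MvPolynomial (Fin n2) ℂ,
      sSup ((fun z => ‖MvPolynomial.eval z p‖) '' K2) ≤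
        C * (1 + ε) ^ p.totalDegree *
          (∫ z in K2, ‖MvPolynomial.eval z p‖ ^ 2 ∂μ2) ^ (1 / 2 : ℝ)) :
    ∀ ε : ℝ, 0 < ε → ∃ C : ℝ, 0 < C ∧ ∀ p : MvPolynomial (Fin n1 ⊕ Fin n2) ℂ,
      sSup ((fun z : (Fin n1 → ℂ) × (Fin n2 → ℂ) =>
          ‖MvPolynomial.eval (Sum.elim z.1 z.2) p‖) '' (K1 ×ˢ K2)) ≤
        C * (1 + ε) ^ p.totalDegree *
          (∫ z in K1 ×ˢ K2, ‖MvPolynomial.eval (Sum.elim z.1 z.2) p‖ ^ 2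
            ∂(μ1.prod μ2)) ^ (1 / 2 : ℝ) := by
  intro ε hε
  set δ := √(1 + ε) - 1
  have hδ : 0 < δ := by
    rw [sub_pos, Real.lt_sqrt zero_le_one]
    linarith
  have hδsq : (1 + δ) ^ 2 = 1 + ε := by
    rw [add_sub_cancel, Real.sq_sqrt (by linarith)]
  obtain ⟨C1, hC1, hB1⟩ := hBM1 δ hδ
  obtain ⟨C2, hC2, hB2⟩ := hBM2 δ hδ
  refine ⟨C1 * C2, mul_pos hC1 hC2, fun p => Real.sSup_le ?_ (by positivity)⟩
  rintro _ ⟨⟨x, y⟩, ⟨hx, hy⟩, rfl⟩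
  refine le_mul_rpow_half_of_sq_le (by positivity) ?_
  rw [← hδsq]
  exact sq_norm_eval_sumElim_le hK1 hK2 hC1.le hC2.le hδ.le hB1 hB2 p hx hy

/-- The product of two Bernstein–Markov measures is Bernstein–Markov on the product compact. -/
theorem stmt15 {n1 n2 : ℕ}
    (K1 : Set (Fin n1 → ℂ)) (K2 : Set (Fin n2 → ℂ))
    (hK1 : IsCompact K1) (hK2 : IsCompact K2)
    (hK1ne : K1.Nonempty) (hK2ne : K2.Nonempty)
    (μ1 : Measure (Fin n1 → ℂ)) (μ2 : Measure (Fin n2 → ℂ))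
    [IsProbabilityMeasure μ1] [IsProbabilityMeasure μ2]
    [SFinite μ2]
    (hμ1supp : μ1 K1ᶜ = 0) (hμ2supp : μ2 K2ᶜ = 0)
    (hBM1 : ∀ ε : ℝ, 0 < ε → ∃ C : ℝ, 0 < C ∧ ∀ p : MvPolynomial (Fin n1) ℂ,
      sSup ((fun z => ‖MvPolynomial.eval z p‖) '' K1) ≤
        C * (1 + ε) ^ p.totalDegree *
          (∫ z in K1, ‖MvPolynomial.eval z p‖ ^ 2 ∂μ1) ^ (1 / 2 : ℝ))
    (hBM2 : ∀ ε : ℝ, 0 < ε → ∃ C : ℝ, 0 < C ∧ ∀ p : MvPolynomial (Fin n2) ℂ,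
      sSup ((fun z => ‖MvPolynomial.eval z p‖) '' K2) ≤
        C * (1 + ε) ^ p.totalDegree *
          (∫ z in K2, ‖MvPolynomial.eval z p‖ ^ 2 ∂μ2) ^ (1 / 2 : ℝ)) :
    ∀ ε : ℝ, 0 < ε → ∃ C : ℝ, 0 < C ∧ ∀ p : MvPolynomial (Fin n1 ⊕ Fin n2) ℂ,
      sSup ((fun z : (Fin n1 → ℂ) × (Fin n2 → ℂ) =>
          ‖MvPolynomial.eval (Sum.elim z.1 z.2) p‖) '' (K1 ×ˢ K2)) ≤
        C * (1 + ε) ^ p.totalDegree *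
          (∫ z in K1 ×ˢ K2, ‖MvPolynomial.eval (Sum.elim z.1 z.2) p‖ ^ 2
            ∂(μ1.prod μ2)) ^ (1 / 2 : ℝ) :=
  stmt15_general K1 K2 hK1 hK2 μ1 μ2 hBM1 hBM2
end
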